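/- arXiv:math/0305346 — 9 statements merged into one kernel-verified Lean document; each statement's English description precedes it below -/
import Mathlib

section
/- Let β be a nonzero vector of V. Then β is the point of minimal norm of the convex hull of {e_i − e_j : (i,j) ∈ S} for some nonempty set S of ordered pairs (i,j) with 1 ≤ i, j ≤ M if and only if there exists an admissible chain-partition datum for e_1,…,e_M such that β/‖β‖² = β̂, i.e. β/‖β‖² = Σ_{h=1}^{L} Σ_{m=l_1(h)}^{l_2(h)} Σ_{j ∈ Δ_{h,m}} (ε(h) − m) e_j/‖e_j‖². -/
open scoped RealInnerProductSpace BigOperators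

/-- A chain-partition datum for the pairwise orthogonal nonzero vectors `e 0, …, e (M-1)`:
a positive integer `L`, functions `l1 l2 : {1,…,L} → ℤ` with `l1 h ≤ l2 h`, and pairwise
disjoint nonempty subsets `Δ h m ⊆ {1,…,M}` for `(h,m)` in the index set
`J = {(h,m) : 1 ≤ h ≤ L, l1 h ≤ m ≤ l2 h}` whose union is `{1,…,M}`. -/
structure ChainPartitionDatum (M : ℕ) (V : Type*) [NormedAddCommGroup V]
    [InnerProductSpace ℝ V] (e : Fin M → V) where
  L : ℕ
  Lpos : 0 < L
  l1 : Fin L → ℤ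
  l2 : Fin L → ℤ
  l1_le_l2 : ∀ h, l1 h ≤ l2 h
  Δ : Fin L → ℤ → Finset (Fin M)
  Δ_nonempty : ∀ h m, l1 h ≤ m → m ≤ l2 h → (Δ h m).Nonempty
  Δ_disjoint : ∀ h m h' m', l1 h ≤ m → m ≤ l2 h → l1 h' ≤ m' → m' ≤ l2 h' →
    (h, m) ≠ (h', m') → Disjoint (Δ h m) (Δ h' m')
  Δ_union : ∀ i : Fin M, ∃ h m, l1 h ≤ m ∧ m ≤ l2 h ∧ i ∈ Δ h m

namespace ChainPartitionDatum

variable {V : Type*} [NormedAddCommGroup V] [InnerProductSpace ℝ V]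
variable {M : ℕ} {e : Fin M → V}

/-- `r h m = Σ_{j ∈ Δ_{h,m}} ‖e_j‖⁻²`. -/
noncomputable def r (D : ChainPartitionDatum M V e) (h : Fin D.L) (m : ℤ) : ℝ :=
  ∑ j ∈ D.Δ h m, (‖e j‖ ^ 2)⁻¹

/-- `ε h = (Σ_{m=l1 h}^{l2 h} m·r_{h,m}) / (Σ_{m=l1 h}^{l2 h} r_{h,m})`. -/
noncomputable def eps (D : ChainPartitionDatum M V e) (h : Fin D.L) : ℝ :=
  (∑ m ∈ Finset.Icc (D.l1 h) (D.l2 h), (m : ℝ) * D.r h m) /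
    ∑ m ∈ Finset.Icc (D.l1 h) (D.l2 h), D.r h m

/-- Admissibility: `−1/2 ≤ ε(h) < 1/2` for all `h` and `ε(1) > ε(2) > … > ε(L)`. -/
def Admissible (D : ChainPartitionDatum M V e) : Prop :=
  (∀ h, -(1 / 2 : ℝ) ≤ D.eps h ∧ D.eps h < 1 / 2) ∧ StrictAnti D.eps

/-- `β̂ = Σ_{h=1}^{L} Σ_{m=l1 h}^{l2 h} Σ_{j ∈ Δ_{h,m}} (ε(h) − m)·e_j/‖e_j‖²`. -/
noncomputable def betaHat (D : ChainPartitionDatum M V e) : V :=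
  ∑ h : Fin D.L, ∑ m ∈ Finset.Icc (D.l1 h) (D.l2 h), ∑ j ∈ D.Δ h m,
    ((D.eps h - (m : ℝ)) / ‖e j‖ ^ 2) • e j

end ChainPartitionDatum

/-!
Write `b = β / ‖β‖²`. If `β` is the point of minimal norm of `C = conv {e_i - e_j : (i,j) ∈ S}`,
then `⟪b, ·⟫ ≥ 1` on `C`, with equality on the pairs that actually occur in `β`, so the potential
`x_k = ⟪b, e_k⟫` drops by exactly one along each of them. Split `x_k = ε_k - m_k` with
`m_k = -round x_k`, so that `ε_k ∈ [-1/2, 1/2)`. For a set `G` of indices closed under the occurring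
pairs, `Σ_{k ∈ G} e_k / ‖e_k‖²` is orthogonal to `β`, i.e. `Σ_{k ∈ G} x_k / ‖e_k‖² = 0`; applied to
the classes of equal `ε`, this shows that their levels have no gaps and that `ε` is the weighted
mean of the levels, so the classes form an admissible chain-partition datum with `β̂ = b`.

Conversely, `⟪β̂, e_i - e_j⟫ = 1` whenever `i ∈ Δ_{h,m}` and `j ∈ Δ_{h,m+1}`, and Abel summation
along each chain writes `β̂` as a combination of differences of consecutive level barycentres whose
coefficients, partial sums of `(ε(h) - m) r_{h,m}`, are nonnegative because `ε(h)` is the weighted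
mean of the levels. Hence `β = β̂ / ‖β̂‖²` lies in the hull of these pairs, and the hull lies in the
hyperplane `⟪β, ·⟫ = ‖β‖²`, on which `β` is the point of minimal norm.
-/

section InnerProductGeometry

variable {V : Type*} [NormedAddCommGroup V] [InnerProductSpace ℝ V]

theorem inner_eq_of_mem_convexHull {s : Set V} {u y : V} {c : ℝ} (hs : ∀ z ∈ s, ⟪u, z⟫ = c)
    (hy : y ∈ convexHull ℝ s) : ⟪u, y⟫ = c :=
  convexHull_min hs (convex_hyperplane (innerₛₗ ℝ u).isLinear c) hy

theorem norm_sq_le_inner_of_forall_norm_le {C : Set V} (hC : Convex ℝ C) {β z : V} (hβ : β ∈ C)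
    (hmin : ∀ x ∈ C, ‖β‖ ≤ ‖x‖) (hz : z ∈ C) : ‖β‖ ^ 2 ≤ ⟪β, z⟫ := by
  have hlocal : IsLocalMinOn (fun x : V => ‖x‖ ^ 2) C β :=
    IsMinOn.localize (isMinOn_iff.2 fun x hx => by gcongr; exact hmin x hx)
  have hderiv := hlocal.hasFDerivWithinAt_nonneg
    (hasStrictFDerivAt_norm_sq β).hasFDerivAt.hasFDerivWithinAt
    (sub_mem_posTangentConeAt_of_segment_subset (hC.segment_subset hβ hz))
  simp only [FunLike.coe_smul, Pi.smul_apply, innerSL_apply_apply, inner_sub_right,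
    real_inner_self_eq_norm_sq, nsmul_eq_mul, Nat.cast_ofNat] at hderiv
  linarith

theorem mem_convexHull_inter_of_inner_le {s : Set V} {u y : V} {c : ℝ}
    (hs : ∀ z ∈ s, c ≤ ⟪u, z⟫) (hy : y ∈ convexHull ℝ s) (hyc : ⟪u, y⟫ = c) :
    y ∈ convexHull ℝ (s ∩ {z | ⟪u, z⟫ = c}) := by
  classical
  rw [convexHull_eq] at hy
  obtain ⟨ι, t, w, z, hw₀, hw₁, hz, rfl⟩ := hy
  have hslack : ∑ i ∈ t, w i * (⟪u, z i⟫ - c) = 0 := by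
    rw [Finset.centerMass_eq_of_sum_1 _ _ hw₁, inner_sum] at hyc
    simp only [real_inner_smul_right] at hyc
    simp only [mul_sub, Finset.sum_sub_distrib, hyc, ← Finset.sum_mul, hw₁, one_mul, sub_self]
  have hface : ∀ i ∈ t, w i ≠ 0 → ⟪u, z i⟫ = c := fun i hi hwi => by
    have hterm := (Finset.sum_eq_zero_iff_of_nonneg fun j hj =>
      mul_nonneg (hw₀ j hj) (sub_nonneg.2 (hs _ (hz j hj)))).1 hslack i hi
    exact sub_eq_zero.1 ((mul_eq_zero.1 hterm).resolve_left hwi)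
  rw [← Finset.centerMass_filter_ne_zero]
  refine Finset.centerMass_mem_convexHull _ (fun i hi => hw₀ i (Finset.mem_filter.1 hi).1) ?_
    fun i hi => ?_
  · rw [Finset.sum_filter_ne_zero, hw₁]
    exact one_pos
  · obtain ⟨hit, hwi⟩ := Finset.mem_filter.1 hi
    exact ⟨hz i hit, hface i hit hwi⟩

theorem Convex.mem_of_eq_sum_smul {C : Set V} (hC : Convex ℝ C) {β : V} (hβ : β ≠ 0)
    (hplane : ∀ y ∈ C, ⟪β, y⟫ = ‖β‖ ^ 2) {ι : Type*} {s : Finset ι} {F : ι → ℝ} {d : ι → V}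
    (hF : ∀ i ∈ s, 0 ≤ F i) (hd : ∀ i ∈ s, d i ∈ C) (hβs : β = ∑ i ∈ s, F i • d i) :
    β ∈ C := by
  have hW : 0 < ∑ i ∈ s, F i := by
    refine (Finset.sum_nonneg hF).lt_of_ne fun hW => hβ ?_
    rw [hβs]
    refine Finset.sum_eq_zero fun i hi => ?_
    rw [(Finset.sum_eq_zero_iff_of_nonneg hF).1 hW.symm i hi, zero_smul]
  have hcenter : s.centerMass F d = (∑ i ∈ s, F i)⁻¹ • β := by rw [hβs]; rfl
  have hmem := hC.centerMass_mem hF hW hd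
  have hW₁ : (∑ i ∈ s, F i)⁻¹ = 1 := by
    have hinner := hplane _ hmem
    rw [hcenter, real_inner_smul_right, real_inner_self_eq_norm_sq] at hinner
    exact mul_right_cancel₀ (by positivity) (hinner.trans (one_mul _).symm)
  rwa [hcenter, hW₁, one_smul] at hmem

theorem norm_le_of_inner_eq_norm_sq {β y : V} (hβ : β ≠ 0) (hy : ⟪β, y⟫ = ‖β‖ ^ 2) :
    ‖β‖ ≤ ‖y‖ := by
  have hcs := real_inner_le_norm β y
  rw [hy, sq] at hcs
  exact le_of_mul_le_mul_left hcs (norm_pos_iff.2 hβ)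

theorem eq_of_mem_span_of_forall_inner_eq {s : Set V} {v w : V} (hv : v ∈ Submodule.span ℝ s)
    (hw : w ∈ Submodule.span ℝ s) (h : ∀ z ∈ s, ⟪v, z⟫ = ⟪w, z⟫) : v = w := by
  have hperp : v - w ∈ (ℝ ∙ (v - w))ᗮ :=
    Submodule.span_le.2 (fun z hz => Submodule.mem_orthogonal_singleton_iff_inner_right.2
      (by rw [inner_sub_left, h z hz, sub_self])) (Submodule.sub_mem _ hv hw)
  exact sub_eq_zero.1 (inner_self_eq_zero.1
    (Submodule.mem_orthogonal_singleton_iff_inner_right.1 hperp))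

theorem inner_sum_smul_of_pairwise_inner_eq_zero {ι : Type*} [DecidableEq ι] {e : ι → V}
    (horth : Pairwise fun i j => ⟪e i, e j⟫ = 0) (s : Finset ι) (c : ι → ℝ) (k : ι) :
    ⟪∑ j ∈ s, c j • e j, e k⟫ = if k ∈ s then c k * ‖e k‖ ^ 2 else 0 := by
  simp only [sum_inner, real_inner_smul_left]
  split_ifs with hk
  · rw [Finset.sum_eq_single_of_mem k hk fun j _ hjk => by rw [horth hjk, mul_zero],
      real_inner_self_eq_norm_sq]
  · exact Finset.sum_eq_zero fun j hj => by rw [horth (ne_of_mem_of_not_mem hj hk), mul_zero]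

end InnerProductGeometry

theorem sum_Icc_add_one_right {W : Type*} [AddCommMonoid W] {a b : ℤ} (hab : a ≤ b + 1)
    (g : ℤ → W) : ∑ m ∈ Finset.Icc a (b + 1), g m = ∑ m ∈ Finset.Icc a b, g m + g (b + 1) := by
  rw [← Finset.insert_Icc_right_eq_Icc_add_one hab, Finset.sum_insert (by simp), add_comm]

theorem Int.sum_Icc_by_parts {R W : Type*} [Ring R] [AddCommGroup W]
    [Module R W] (f : ℤ → R) (c : ℤ → W) {a b : ℤ} (hab : a ≤ b) :
    ∑ m ∈ Finset.Icc a b, f m • c m =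
      ∑ m ∈ Finset.Icc a (b - 1), (∑ k ∈ Finset.Icc a m, f k) • (c m - c (m + 1)) +
        (∑ k ∈ Finset.Icc a b, f k) • c b := by
  induction b, hab using Int.leInduction with
  | base => simp
  | succ b hab ih =>
    have hlast := sum_Icc_add_one_right (a := a) (b := b - 1) (by omega)
      fun m => (∑ k ∈ Finset.Icc a m, f k) • (c m - c (m + 1))
    rw [sub_add_cancel] at hlast
    rw [sum_Icc_add_one_right (by omega : a ≤ b + 1), ih, add_sub_cancel_right, hlast,
      sum_Icc_add_one_right (by omega : a ≤ b + 1) f]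
    simp only [smul_sub, add_smul]
    abel

theorem exists_nonneg_of_sum_mul_eq_zero {ι : Type*} {s : Finset ι} (hs : s.Nonempty)
    {x w : ι → ℝ} (hw : ∀ i, 0 < w i) (h : ∑ i ∈ s, x i * w i = 0) : ∃ i ∈ s, 0 ≤ x i := by
  obtain ⟨i, hi, hle⟩ := Finset.exists_le_of_sum_le hs (f := fun _ => 0)
    (g := fun i => x i * w i) (by rw [h, Finset.sum_const_zero])
  exact ⟨i, hi, (mul_nonneg_iff_of_pos_right (hw i)).1 hle⟩

theorem exists_nonpos_of_sum_mul_eq_zero {ι : Type*} {s : Finset ι} (hs : s.Nonempty)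
    {x w : ι → ℝ} (hw : ∀ i, 0 < w i) (h : ∑ i ∈ s, x i * w i = 0) : ∃ i ∈ s, x i ≤ 0 := by
  obtain ⟨i, hi, hx⟩ := exists_nonneg_of_sum_mul_eq_zero hs (x := fun i => -x i) hw
    (by simp only [neg_mul, Finset.sum_neg_distrib, h, neg_zero])
  exact ⟨i, hi, neg_nonneg.1 hx⟩

theorem sub_round_eq_and_round_eq_add_one_of_eq_add_one {a b : ℝ} (h : a = b + 1) :
    a - round a = b - round b ∧ round a = round b + 1 := by
  have hround : round a = round b + 1 := by rw [h, round_add_one]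
  refine ⟨?_, hround⟩
  rw [hround, h]
  push_cast
  ring

def IsClosedUnder {α : Type*} (T : Set (α × α)) (G : Finset α) : Prop :=
  ∀ p ∈ T, p.1 ∈ G ↔ p.2 ∈ G

def LevelsGapFree {M : ℕ} (val : Fin M → ℝ) (lev : Fin M → ℤ) : Prop :=
  ∀ k k' : Fin M, val k = val k' → ∀ m, lev k ≤ m → m ≤ lev k' →
    ∃ k'', val k'' = val k ∧ lev k'' = m

section Potential

variable {M : ℕ} {x w : Fin M → ℝ} {T : Set (Fin M × Fin M)}

theorem isClosedUnder_fiber_sub_round (hstep : ∀ p ∈ T, x p.1 = x p.2 + 1) (v : ℝ) :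
    IsClosedUnder T (Finset.univ.filter fun k => x k - round (x k) = v) := fun p hp => by
  simp only [Finset.mem_filter, Finset.mem_univ, true_and,
    (sub_round_eq_and_round_eq_add_one_of_eq_add_one (hstep p hp)).1]

theorem isClosedUnder_filter_level (hstep : ∀ p ∈ T, x p.1 = x p.2 + 1) {v : ℝ} {m : ℤ}
    (hgap : ∀ j, x j - round (x j) = v → -round (x j) ≠ m) (P : ℤ → Prop) [DecidablePred P]
    (hP : ∀ l, l ≠ m → l + 1 ≠ m → (P l ↔ P (l + 1))) :
    IsClosedUnder T (Finset.univ.filter fun j => x j - round (x j) = v ∧ P (-round (x j))) := by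
  intro p hp
  obtain ⟨hv, hround⟩ := sub_round_eq_and_round_eq_add_one_of_eq_add_one (hstep p hp)
  simp only [Finset.mem_filter, Finset.mem_univ, true_and, hv]
  refine and_congr_right fun hpv => ?_
  have hlev : -round (x p.2) = -round (x p.1) + 1 := by omega
  rw [hlev]
  exact hP _ (hgap p.1 (hv.trans hpv)) (hlev ▸ hgap p.2 hpv)

theorem levelsGapFree_sub_round (hw : ∀ k, 0 < w k) (hstep : ∀ p ∈ T, x p.1 = x p.2 + 1)
    (hclosed : ∀ G, IsClosedUnder T G → ∑ k ∈ G, x k * w k = 0) :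
    LevelsGapFree (fun k => x k - round (x k)) (fun k => -round (x k)) := by
  intro k k' hkk' m hkm hmk'
  beta_reduce at hkk' hkm hmk'
  by_contra! hgap
  set v := x k - round (x k)
  -- A gap at level `m` cuts the class of `k` into closed parts above and below `m`, on which
  -- `x` is at most `v - m - 1`, resp. at least `v - m + 1`; both weighted sums cannot vanish.
  have hupper := hclosed _ (isClosedUnder_filter_level hstep hgap (m < ·) fun l _ _ => by omega)
  have hlower := hclosed _ (isClosedUnder_filter_level hstep hgap (· < m) fun l _ _ => by omega)
  obtain ⟨j, hj, hxj⟩ := exists_nonneg_of_sum_mul_eq_zero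
    ⟨k', Finset.mem_filter.2 ⟨Finset.mem_univ _, hkk'.symm, by have := hgap k' hkk'.symm; omega⟩⟩
    hw hupper
  obtain ⟨j', hj', hxj'⟩ := exists_nonpos_of_sum_mul_eq_zero
    ⟨k, Finset.mem_filter.2 ⟨Finset.mem_univ _, rfl, by have := hgap k rfl; omega⟩⟩ hw hlower
  obtain ⟨hjv, hjm⟩ := (Finset.mem_filter.1 hj).2
  obtain ⟨hj'v, hj'm⟩ := (Finset.mem_filter.1 hj').2
  have hjm' : (m : ℝ) + 1 ≤ -round (x j) := by exact_mod_cast hjm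
  have hj'm' : (-round (x j') : ℤ) + 1 ≤ (m : ℝ) := by exact_mod_cast hj'm
  push_cast at hjm' hj'm'
  linarith

theorem sum_fiber_sub_round_mul_eq_zero (hstep : ∀ p ∈ T, x p.1 = x p.2 + 1)
    (hclosed : ∀ G, IsClosedUnder T G → ∑ k ∈ G, x k * w k = 0) (v : ℝ) :
    ∑ k ∈ Finset.univ.filter (fun k => x k - round (x k) = v),
      (x k - round (x k) - ((-round (x k) : ℤ) : ℝ)) * w k = 0 := by
  push_cast
  simp only [sub_neg_eq_add, sub_add_cancel]
  exact hclosed _ (isClosedUnder_fiber_sub_round hstep v)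

end Potential

theorem sum_inner_mul_inv_norm_sq_eq_zero {V : Type*} [NormedAddCommGroup V]
    [InnerProductSpace ℝ V] {M : ℕ} {e : Fin M → V} (he : ∀ i, e i ≠ 0)
    (horth : Pairwise fun i j => ⟪e i, e j⟫ = 0) {T : Set (Fin M × Fin M)} {y : V}
    (hy : y ∈ Submodule.span ℝ ((fun p : Fin M × Fin M => e p.1 - e p.2) '' T))
    {G : Finset (Fin M)} (hG : IsClosedUnder T G) :
    ∑ k ∈ G, ⟪y, e k⟫ * (‖e k‖ ^ 2)⁻¹ = 0 := by
  classical
  set u := ∑ j ∈ G, (‖e j‖ ^ 2)⁻¹ • e j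
  have hind : ∀ k, ⟪u, e k⟫ = if k ∈ G then 1 else 0 := fun k => by
    rw [inner_sum_smul_of_pairwise_inner_eq_zero horth]
    split_ifs
    · exact inv_mul_cancel₀ (pow_ne_zero 2 (norm_ne_zero_iff.2 (he k)))
    · rfl
  have hyu : y ∈ (ℝ ∙ u)ᗮ := by
    refine Submodule.span_le.2 ?_ hy
    rintro _ ⟨p, hp, rfl⟩
    rw [SetLike.mem_coe, Submodule.mem_orthogonal_singleton_iff_inner_right, inner_sub_right,
      hind, hind, if_congr (hG p hp) rfl rfl, sub_self]
  calc ∑ k ∈ G, ⟪y, e k⟫ * (‖e k‖ ^ 2)⁻¹ = ⟪y, u⟫ := by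
        simp only [u, inner_sum, real_inner_smul_right, mul_comm]
    _ = 0 := by rw [real_inner_comm, Submodule.mem_orthogonal_singleton_iff_inner_right.1 hyu]

namespace ChainPartitionDatum

variable {V : Type*} [NormedAddCommGroup V] [InnerProductSpace ℝ V] {M : ℕ} {e : Fin M → V}

section Datum

variable (D : ChainPartitionDatum M V e)

theorem r_nonneg (h : Fin D.L) (m : ℤ) : 0 ≤ D.r h m :=
  Finset.sum_nonneg fun _ _ => by positivity

theorem r_pos (he : ∀ i, e i ≠ 0) {h : Fin D.L} {m : ℤ}
    (hm : m ∈ Finset.Icc (D.l1 h) (D.l2 h)) : 0 < D.r h m := by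
  rw [Finset.mem_Icc] at hm
  refine Finset.sum_pos (fun j _ => ?_) (D.Δ_nonempty h m hm.1 hm.2)
  have := norm_pos_iff.2 (he j)
  positivity

theorem eps_eq_iff (he : ∀ i, e i ≠ 0) (h : Fin D.L) (c : ℝ) :
    D.eps h = c ↔ ∑ m ∈ Finset.Icc (D.l1 h) (D.l2 h), (c - m) * D.r h m = 0 := by
  have hpos : 0 < ∑ m ∈ Finset.Icc (D.l1 h) (D.l2 h), D.r h m :=
    Finset.sum_pos (fun m hm => D.r_pos he hm) ⟨D.l1 h, Finset.mem_Icc.2 ⟨le_rfl, D.l1_le_l2 h⟩⟩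
  rw [eps, div_eq_iff hpos.ne']
  simp only [sub_mul, Finset.sum_sub_distrib, ← Finset.mul_sum]
  constructor <;> intro <;> linarith

theorem eq_of_mem_Δ {j : Fin M} {h h' : Fin D.L} {m m' : ℤ}
    (hm : m ∈ Finset.Icc (D.l1 h) (D.l2 h)) (hm' : m' ∈ Finset.Icc (D.l1 h') (D.l2 h'))
    (hj : j ∈ D.Δ h m) (hj' : j ∈ D.Δ h' m') : h = h' ∧ m = m' := by
  rw [Finset.mem_Icc] at hm hm'
  by_contra hne
  exact Finset.disjoint_left.1 (D.Δ_disjoint h m h' m' hm.1 hm.2 hm'.1 hm'.2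
    fun heq => hne (Prod.ext_iff.1 heq)) hj hj'

/-- The value `ε(h) − m` on the class `Δ_{h,m}` containing `j`. -/
noncomputable def potential (j : Fin M) : ℝ :=
  D.eps (D.Δ_union j).choose - (D.Δ_union j).choose_spec.choose

theorem potential_eq {j : Fin M} {h : Fin D.L} {m : ℤ} (hm : m ∈ Finset.Icc (D.l1 h) (D.l2 h))
    (hj : j ∈ D.Δ h m) : D.potential j = D.eps h - m := by
  obtain ⟨h₁, h₂, hj'⟩ := (D.Δ_union j).choose_spec.choose_spec
  obtain ⟨rfl, rfl⟩ := D.eq_of_mem_Δ (Finset.mem_Icc.2 ⟨h₁, h₂⟩) hm hj' hj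
  rfl

theorem sum_sum_sum_Δ_eq_sum {α : Type*} [AddCommMonoid α] (g : Fin M → α) :
    ∑ h : Fin D.L, ∑ m ∈ Finset.Icc (D.l1 h) (D.l2 h), ∑ j ∈ D.Δ h m, g j = ∑ j, g j := by
  classical
  set J := Finset.univ.sigma fun h => Finset.Icc (D.l1 h) (D.l2 h)
  have hdisj : (J : Set ((_ : Fin D.L) × ℤ)).PairwiseDisjoint fun p => D.Δ p.1 p.2 := by
    rintro ⟨h, m⟩ hp ⟨h', m'⟩ hp' hne
    simp only [J, Finset.coe_sigma, Set.mem_sigma_iff, Finset.coe_Icc, Set.mem_Icc] at hp hp'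
    exact D.Δ_disjoint h m h' m' hp.2.1 hp.2.2 hp'.2.1 hp'.2.2 (by simpa using hne)
  have hcover : J.biUnion (fun p => D.Δ p.1 p.2) = Finset.univ := by
    refine Finset.eq_univ_iff_forall.2 fun j => ?_
    obtain ⟨h, m, h₁, h₂, hj⟩ := D.Δ_union j
    exact Finset.mem_biUnion.2 ⟨⟨h, m⟩, Finset.mem_sigma.2 ⟨Finset.mem_univ h,
      Finset.mem_Icc.2 ⟨h₁, h₂⟩⟩, hj⟩
  rw [← hcover, Finset.sum_biUnion hdisj, Finset.sum_sigma]

theorem betaHat_eq_sum_potential : D.betaHat = ∑ j, (D.potential j / ‖e j‖ ^ 2) • e j := by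
  rw [betaHat, ← D.sum_sum_sum_Δ_eq_sum]
  refine Finset.sum_congr rfl fun h _ => Finset.sum_congr rfl fun m hm =>
    Finset.sum_congr rfl fun j hj => ?_
  rw [D.potential_eq hm hj]

theorem betaHat_mem_span : D.betaHat ∈ Submodule.span ℝ (Set.range e) := by
  rw [betaHat_eq_sum_potential]
  exact Submodule.sum_mem _ fun j _ =>
    Submodule.smul_mem _ _ (Submodule.subset_span (Set.mem_range_self j))

theorem inner_betaHat (he : ∀ i, e i ≠ 0) (horth : Pairwise fun i j => ⟪e i, e j⟫ = 0)
    (k : Fin M) : ⟪D.betaHat, e k⟫ = D.potential k := by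
  classical
  rw [betaHat_eq_sum_potential, inner_sum_smul_of_pairwise_inner_eq_zero horth,
    if_pos (Finset.mem_univ k), div_mul_cancel₀ _ (pow_ne_zero 2 (norm_ne_zero_iff.2 (he k)))]

noncomputable def levelCenter (h : Fin D.L) (m : ℤ) : V :=
  (D.Δ h m).centerMass (fun j => (‖e j‖ ^ 2)⁻¹) e

theorem sum_smul_eq_smul_levelCenter (he : ∀ i, e i ≠ 0) {h : Fin D.L} {m : ℤ}
    (hm : m ∈ Finset.Icc (D.l1 h) (D.l2 h)) (a : ℝ) :
    ∑ j ∈ D.Δ h m, (a / ‖e j‖ ^ 2) • e j = (a * D.r h m) • D.levelCenter h m := by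
  rw [levelCenter, Finset.centerMass, smul_smul, mul_assoc]
  change _ = (a * (D.r h m * (D.r h m)⁻¹)) • _
  rw [mul_inv_cancel₀ (D.r_pos he hm).ne', mul_one, Finset.smul_sum]
  simp_rw [smul_smul, div_eq_mul_inv]

noncomputable def partialSum (h : Fin D.L) (m : ℤ) : ℝ :=
  ∑ k ∈ Finset.Icc (D.l1 h) m, (D.eps h - k) * D.r h k

/-- `ε(h)` is the `r`-weighted mean of the levels, so the summands `(ε(h) - k) r_{h,k}` sum to `0`
and change sign only once, from `≥ 0` to `≤ 0`. -/
theorem partialSum_nonneg (he : ∀ i, e i ≠ 0) {h : Fin D.L} {m : ℤ} (hm : m ≤ D.l2 h) :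
    0 ≤ D.partialSum h m := by
  have hIcc : Finset.Icc (D.l1 h) m = (Finset.Icc (D.l1 h) (D.l2 h)).filter (· ≤ m) := by
    ext k
    simp only [Finset.mem_Icc, Finset.mem_filter]
    omega
  rw [partialSum, hIcc]
  rcases le_or_gt (m : ℝ) (D.eps h) with hle | hlt
  · refine Finset.sum_nonneg fun k hk => mul_nonneg ?_ (D.r_nonneg h k)
    have : (k : ℝ) ≤ m := Int.cast_le.2 (Finset.mem_filter.1 hk).2
    linarith
  · have htotal := (D.eps_eq_iff he h _).1 rfl
    rw [← Finset.sum_filter_add_sum_filter_not _ (· ≤ m)] at htotal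
    have hupper : ∑ k ∈ (Finset.Icc (D.l1 h) (D.l2 h)).filter (¬· ≤ m),
        (D.eps h - k) * D.r h k ≤ 0 := by
      refine Finset.sum_nonpos fun k hk => mul_nonpos_of_nonpos_of_nonneg ?_ (D.r_nonneg h k)
      have : (m : ℝ) < k := Int.cast_lt.2 (not_le.1 (Finset.mem_filter.1 hk).2)
      linarith
    linarith

theorem betaHat_eq_sum_partialSum_smul (he : ∀ i, e i ≠ 0) :
    D.betaHat = ∑ h : Fin D.L, ∑ m ∈ Finset.Icc (D.l1 h) (D.l2 h - 1),
      D.partialSum h m • (D.levelCenter h m - D.levelCenter h (m + 1)) := by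
  refine Finset.sum_congr rfl fun h _ => ?_
  rw [Finset.sum_congr rfl fun m hm => D.sum_smul_eq_smul_levelCenter he hm _,
    Int.sum_Icc_by_parts _ _ (D.l1_le_l2 h), (D.eps_eq_iff he h _).1 rfl,
    zero_smul, add_zero]
  rfl

def edgeSet : Set (Fin M × Fin M) :=
  {p | ∃ h m, m ∈ Finset.Icc (D.l1 h) (D.l2 h - 1) ∧ p.1 ∈ D.Δ h m ∧ p.2 ∈ D.Δ h (m + 1)}

theorem levelCenter_sub_mem_convexHull (he : ∀ i, e i ≠ 0) {h : Fin D.L} {m : ℤ}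
    (hm : m ∈ Finset.Icc (D.l1 h) (D.l2 h - 1)) :
    D.levelCenter h m - D.levelCenter h (m + 1) ∈
      convexHull ℝ ((fun p : Fin M × Fin M => e p.1 - e p.2) '' D.edgeSet) := by
  have hcenter : ∀ m' ∈ Finset.Icc (D.l1 h) (D.l2 h),
      D.levelCenter h m' ∈ convexHull ℝ (e '' D.Δ h m') := fun m' hm' =>
    Finset.centerMass_mem_convexHull _ (fun j _ => by positivity) (D.r_pos he hm')
      fun j hj => Set.mem_image_of_mem e hj
  rw [Finset.mem_Icc] at hm
  have hsub := Set.sub_mem_sub (hcenter m (Finset.mem_Icc.2 ⟨hm.1, by omega⟩))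
    (hcenter (m + 1) (Finset.mem_Icc.2 ⟨by omega, by omega⟩))
  rw [← convexHull_sub] at hsub
  refine convexHull_mono ?_ hsub
  rintro _ ⟨_, ⟨i, hi, rfl⟩, _, ⟨j, hj, rfl⟩, rfl⟩
  exact ⟨(i, j), ⟨h, m, Finset.mem_Icc.2 hm, hi, hj⟩, rfl⟩

theorem inner_betaHat_of_mem_edgeSet (he : ∀ i, e i ≠ 0)
    (horth : Pairwise fun i j => ⟪e i, e j⟫ = 0) {p : Fin M × Fin M} (hp : p ∈ D.edgeSet) :
    ⟪D.betaHat, e p.1 - e p.2⟫ = 1 := by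
  obtain ⟨h, m, hm, hi, hj⟩ := hp
  rw [Finset.mem_Icc] at hm
  rw [inner_sub_right, D.inner_betaHat he horth, D.inner_betaHat he horth,
    D.potential_eq (Finset.mem_Icc.2 ⟨hm.1, by omega⟩) hi,
    D.potential_eq (Finset.mem_Icc.2 ⟨by omega, by omega⟩) hj]
  push_cast
  ring

theorem isMinNorm_of_inv_norm_sq_smul_eq_betaHat (he : ∀ i, e i ≠ 0)
    (horth : Pairwise fun i j => ⟪e i, e j⟫ = 0) {β : V} (hβ : β ≠ 0)
    (hβD : (‖β‖ ^ 2)⁻¹ • β = D.betaHat) :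
    β ∈ convexHull ℝ ((fun p : Fin M × Fin M => e p.1 - e p.2) '' D.edgeSet) ∧
      ∀ x ∈ convexHull ℝ ((fun p : Fin M × Fin M => e p.1 - e p.2) '' D.edgeSet), ‖β‖ ≤ ‖x‖ := by
  have hβ₂ : ‖β‖ ^ 2 ≠ 0 := by positivity
  have hβeq : β = ‖β‖ ^ 2 • D.betaHat := by rw [← hβD, smul_inv_smul₀ hβ₂]
  have hplane : ∀ y ∈ convexHull ℝ ((fun p : Fin M × Fin M => e p.1 - e p.2) '' D.edgeSet),
      ⟪β, y⟫ = ‖β‖ ^ 2 := by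
    refine fun y => inner_eq_of_mem_convexHull ?_
    rintro _ ⟨p, hp, rfl⟩
    conv_lhs => rw [hβeq]
    rw [real_inner_smul_left, D.inner_betaHat_of_mem_edgeSet he horth hp, mul_one]
  refine ⟨(convex_convexHull ℝ _).mem_of_eq_sum_smul hβ hplane
    (s := Finset.univ.sigma fun h => Finset.Icc (D.l1 h) (D.l2 h - 1))
    (F := fun p => ‖β‖ ^ 2 * D.partialSum p.1 p.2)
    (d := fun p => D.levelCenter p.1 p.2 - D.levelCenter p.1 (p.2 + 1)) ?_ ?_ ?_,
    fun y hy => norm_le_of_inner_eq_norm_sq hβ (hplane y hy)⟩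
  · rintro ⟨h, m⟩ hp
    have hm := (Finset.mem_Icc.1 (Finset.mem_sigma.1 hp).2).2
    exact mul_nonneg (by positivity) (D.partialSum_nonneg he (by omega))
  · rintro ⟨h, m⟩ hp
    exact D.levelCenter_sub_mem_convexHull he (Finset.mem_sigma.1 hp).2
  · conv_lhs => rw [hβeq]
    rw [Finset.sum_sigma, D.betaHat_eq_sum_partialSum_smul he, Finset.smul_sum]
    simp_rw [Finset.smul_sum, smul_smul]

end Datum

section OfLabels

variable (val : Fin M → ℝ) (lev : Fin M → ℤ)

noncomputable def labelValue (h : Fin (Finset.univ.image val).card) : ℝ :=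
  (Finset.univ.image val).orderEmbOfFin rfl h.rev

theorem labelValue_strictAnti : StrictAnti (labelValue val) :=
  fun _ _ hab => (Finset.orderEmbOfFin _ rfl).strictMono (Fin.rev_lt_rev.2 hab)

theorem exists_labelValue_eq (k : Fin M) : ∃ h, labelValue val h = val k := by
  have hk : val k ∈ Set.range ((Finset.univ.image val).orderEmbOfFin rfl) := by
    rw [Finset.range_orderEmbOfFin]
    simp
  obtain ⟨h, hh⟩ := hk
  exact ⟨h.rev, by simp [labelValue, hh]⟩

noncomputable def labelClass (h : Fin (Finset.univ.image val).card) : Finset (Fin M) :=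
  Finset.univ.filter (val · = labelValue val h)

theorem labelClass_nonempty (h : Fin (Finset.univ.image val).card) :
    (labelClass val h).Nonempty := by
  obtain ⟨k, -, hk⟩ := Finset.mem_image.1 (Finset.orderEmbOfFin_mem _ rfl h.rev)
  exact ⟨k, Finset.mem_filter.2 ⟨Finset.mem_univ k, hk⟩⟩

variable {val lev}

@[reducible] noncomputable def ofLabels [Nonempty (Fin M)] (hgap : LevelsGapFree val lev) :
    ChainPartitionDatum M V e where
  L := (Finset.univ.image val).card
  Lpos := Finset.card_pos.2 (Finset.univ_nonempty.image val)
  l1 h := ((labelClass val h).image lev).min' ((labelClass_nonempty val h).image lev)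
  l2 h := ((labelClass val h).image lev).max' ((labelClass_nonempty val h).image lev)
  l1_le_l2 h := Finset.min'_le _ _ (Finset.max'_mem ((labelClass val h).image lev) _)
  Δ h m := (labelClass val h).filter (lev · = m)
  Δ_nonempty h m h₁ h₂ := by
    obtain ⟨k, hk, hkm⟩ := Finset.mem_image.1 (Finset.min'_mem ((labelClass val h).image lev) _)
    obtain ⟨k', hk', hk'm⟩ := Finset.mem_image.1 (Finset.max'_mem ((labelClass val h).image lev) _)
    rw [← hkm] at h₁
    rw [← hk'm] at h₂
    have hval := (Finset.mem_filter.1 hk).2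
    obtain ⟨k'', hk'', rfl⟩ :=
      hgap k k' (hval.trans (Finset.mem_filter.1 hk').2.symm) m h₁ h₂
    exact ⟨k'', Finset.mem_filter.2 ⟨Finset.mem_filter.2 ⟨Finset.mem_univ _, hk''.trans hval⟩, rfl⟩⟩
  Δ_disjoint h m h' m' _ _ _ _ hne := by
    refine Finset.disjoint_left.2 fun k hk hk' => hne ?_
    simp only [labelClass, Finset.mem_filter, Finset.mem_univ, true_and] at hk hk'
    rw [(labelValue_strictAnti val).injective (hk.1.symm.trans hk'.1), ← hk.2, ← hk'.2]
  Δ_union k := by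
    obtain ⟨h, hh⟩ := exists_labelValue_eq val k
    have hk : k ∈ labelClass val h := Finset.mem_filter.2 ⟨Finset.mem_univ k, hh.symm⟩
    exact ⟨h, lev k, Finset.min'_le _ _ (Finset.mem_image_of_mem lev hk),
      Finset.le_max' _ _ (Finset.mem_image_of_mem lev hk), Finset.mem_filter.2 ⟨hk, rfl⟩⟩

variable [Nonempty (Fin M)] (hgap : LevelsGapFree val lev)

theorem lev_mem_Icc_ofLabels {h : Fin (ofLabels hgap : ChainPartitionDatum M V e).L} {k : Fin M}
    (hk : val k = labelValue val h) :
    lev k ∈ Finset.Icc ((ofLabels hgap : ChainPartitionDatum M V e).l1 h)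
      ((ofLabels hgap : ChainPartitionDatum M V e).l2 h) :=
  have hk : k ∈ labelClass val h := Finset.mem_filter.2 ⟨Finset.mem_univ k, hk⟩
  Finset.mem_Icc.2 ⟨Finset.min'_le _ _ (Finset.mem_image_of_mem lev hk),
    Finset.le_max' _ _ (Finset.mem_image_of_mem lev hk)⟩

theorem eps_ofLabels (he : ∀ i, e i ≠ 0)
    (hmean : ∀ v, ∑ k ∈ Finset.univ.filter (val · = v), (val k - lev k) * (‖e k‖ ^ 2)⁻¹ = 0)
    (h : Fin (ofLabels hgap : ChainPartitionDatum M V e).L) :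
    (ofLabels hgap : ChainPartitionDatum M V e).eps h = labelValue val h := by
  rw [eps_eq_iff _ he, ← hmean (labelValue val h), ← Finset.sum_fiberwise_of_maps_to
    fun k hk => lev_mem_Icc_ofLabels (V := V) (e := e) hgap (Finset.mem_filter.1 hk).2]
  refine Finset.sum_congr rfl fun m _ => ?_
  rw [r, Finset.mul_sum]
  refine Finset.sum_congr rfl fun k hk => ?_
  obtain ⟨hkv, rfl⟩ := Finset.mem_filter.1 hk
  rw [(Finset.mem_filter.1 hkv).2]

theorem admissible_ofLabels (he : ∀ i, e i ≠ 0) (hval : ∀ k, -(1 / 2) ≤ val k ∧ val k < 1 / 2)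
    (hmean : ∀ v, ∑ k ∈ Finset.univ.filter (val · = v), (val k - lev k) * (‖e k‖ ^ 2)⁻¹ = 0) :
    (ofLabels hgap : ChainPartitionDatum M V e).Admissible := by
  refine ⟨fun h => ?_, fun a b hab => ?_⟩
  · obtain ⟨k, hk⟩ := labelClass_nonempty val h
    rw [eps_ofLabels hgap he hmean, ← (Finset.mem_filter.1 hk).2]
    exact hval k
  · rw [eps_ofLabels hgap he hmean, eps_ofLabels hgap he hmean]
    exact labelValue_strictAnti val hab

theorem potential_ofLabels (he : ∀ i, e i ≠ 0)
    (hmean : ∀ v, ∑ k ∈ Finset.univ.filter (val · = v), (val k - lev k) * (‖e k‖ ^ 2)⁻¹ = 0)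
    (k : Fin M) : (ofLabels hgap : ChainPartitionDatum M V e).potential k = val k - lev k := by
  obtain ⟨h, hh⟩ := exists_labelValue_eq val k
  rw [potential_eq _ (lev_mem_Icc_ofLabels hgap hh.symm)
    (Finset.mem_filter.2 ⟨Finset.mem_filter.2 ⟨Finset.mem_univ k, hh.symm⟩, rfl⟩),
    eps_ofLabels hgap he hmean, hh]

end OfLabels

theorem exists_admissible_potential_eq (he : ∀ i, e i ≠ 0) [Nonempty (Fin M)] {x : Fin M → ℝ}
    {T : Set (Fin M × Fin M)} (hstep : ∀ p ∈ T, x p.1 = x p.2 + 1)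
    (hclosed : ∀ G, IsClosedUnder T G → ∑ k ∈ G, x k * (‖e k‖ ^ 2)⁻¹ = 0) :
    ∃ D : ChainPartitionDatum M V e, D.Admissible ∧ ∀ k, D.potential k = x k := by
  have hw : ∀ k, 0 < (‖e k‖ ^ 2)⁻¹ := fun k => by
    have := norm_pos_iff.2 (he k)
    positivity
  have hgap := levelsGapFree_sub_round hw hstep hclosed
  have hmean := sum_fiber_sub_round_mul_eq_zero hstep hclosed
  refine ⟨ofLabels hgap, admissible_ofLabels hgap he (fun k => ⟨?_, ?_⟩) hmean, fun k => ?_⟩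
  · linarith [round_le_add_half (x k)]
  · linarith [sub_half_lt_round (x k)]
  · rw [potential_ofLabels hgap he hmean]
    push_cast
    ring

theorem exists_admissible_of_isMinNorm (he : ∀ i, e i ≠ 0)
    (horth : Pairwise fun i j => ⟪e i, e j⟫ = 0) {β : V} (hβ : β ≠ 0) {S : Set (Fin M × Fin M)} (hS : S.Nonempty)
    (hmem : β ∈ convexHull ℝ ((fun p : Fin M × Fin M => e p.1 - e p.2) '' S))
    (hmin : ∀ x ∈ convexHull ℝ ((fun p : Fin M × Fin M => e p.1 - e p.2) '' S), ‖β‖ ≤ ‖x‖) :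
    ∃ D : ChainPartitionDatum M V e, D.Admissible ∧ (‖β‖ ^ 2)⁻¹ • β = D.betaHat := by
  have : Nonempty (Fin M) := ⟨hS.some.1⟩
  set f := fun p : Fin M × Fin M => e p.1 - e p.2
  set b := (‖β‖ ^ 2)⁻¹ • β
  have hβ₂ : ‖β‖ ^ 2 ≠ 0 := by positivity
  set T := S ∩ f ⁻¹' {z | ⟪β, z⟫ = ‖β‖ ^ 2}
  have hT : β ∈ convexHull ℝ (f '' T) := by
    rw [Set.image_inter_preimage]
    exact mem_convexHull_inter_of_inner_le (fun z hz => norm_sq_le_inner_of_forall_norm_le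
      (convex_convexHull ℝ _) hmem hmin (subset_convexHull ℝ _ hz)) hmem
      (real_inner_self_eq_norm_sq β)
  have hstep : ∀ p ∈ T, ⟪b, e p.1⟫ = ⟪b, e p.2⟫ + 1 := by
    rintro p ⟨-, hp⟩
    have hp : ⟪β, e p.1 - e p.2⟫ = ‖β‖ ^ 2 := hp
    rw [inner_sub_right] at hp
    simp only [b, real_inner_smul_left]
    field_simp
    linarith
  have hbT : b ∈ Submodule.span ℝ (f '' T) :=
    Submodule.smul_mem _ _ (convexHull_min Submodule.subset_span (Submodule.span ℝ _).convex hT)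
  obtain ⟨D, hD, hpot⟩ := exists_admissible_potential_eq he hstep fun _ hG =>
    sum_inner_mul_inv_norm_sq_eq_zero he horth hbT hG
  have hspan : Submodule.span ℝ (f '' T) ≤ Submodule.span ℝ (Set.range e) := by
    refine Submodule.span_le.2 ?_
    rintro _ ⟨p, -, rfl⟩
    exact Submodule.sub_mem _ (Submodule.subset_span ⟨p.1, rfl⟩)
      (Submodule.subset_span ⟨p.2, rfl⟩)
  refine ⟨D, hD, eq_of_mem_span_of_forall_inner_eq (hspan hbT) D.betaHat_mem_span ?_⟩
  rintro _ ⟨k, rfl⟩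
  rw [D.inner_betaHat he horth, hpot]

end ChainPartitionDatum

theorem minNormPoint_iff_exists_admissible_chainPartitionDatum_general
    {V : Type*} [NormedAddCommGroup V] [InnerProductSpace ℝ V]
    {M : ℕ} (e : Fin M → V) (he : ∀ i, e i ≠ 0)
    (horth : ∀ i j : Fin M, i ≠ j → ⟪e i, e j⟫ = 0)
    (β : V) (hβ : β ≠ 0) :
    (∃ S : Set (Fin M × Fin M), S.Nonempty ∧
        β ∈ convexHull ℝ ((fun p : Fin M × Fin M => e p.1 - e p.2) '' S) ∧
        ∀ x ∈ convexHull ℝ ((fun p : Fin M × Fin M => e p.1 - e p.2) '' S), ‖β‖ ≤ ‖x‖) ↔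
      ∃ D : ChainPartitionDatum M V e, D.Admissible ∧ (‖β‖ ^ 2)⁻¹ • β = D.betaHat := by
  constructor
  · rintro ⟨S, hS, hmem, hmin⟩
    exact ChainPartitionDatum.exists_admissible_of_isMinNorm he horth hβ hS hmem hmin
  · rintro ⟨D, -, hβD⟩
    obtain ⟨hmem, hmin⟩ := D.isMinNorm_of_inv_norm_sq_smul_eq_betaHat he horth hβ hβD
    exact ⟨D.edgeSet, (convexHull_nonempty_iff.1 ⟨β, hmem⟩).of_image, hmem, hmin⟩

/-- A nonzero `β` is a point of minimal norm of the convex hull of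
`{e_i − e_j : (i,j) ∈ S}` for some nonempty set `S` of ordered pairs if and only if
there is an admissible chain-partition datum with `β/‖β‖² = β̂`. -/
theorem minNormPoint_iff_exists_admissible_chainPartitionDatum
    {V : Type*} [NormedAddCommGroup V] [InnerProductSpace ℝ V]
    {M : ℕ} (hM : 0 < M) (e : Fin M → V) (he : ∀ i, e i ≠ 0)
    (horth : ∀ i j : Fin M, i ≠ j → ⟪e i, e j⟫ = 0)
    (β : V) (hβ : β ≠ 0) :
    (∃ S : Set (Fin M × Fin M), S.Nonempty ∧
        β ∈ convexHull ℝ ((fun p : Fin M × Fin M => e p.1 - e p.2) '' S) ∧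
        ∀ x ∈ convexHull ℝ ((fun p : Fin M × Fin M => e p.1 - e p.2) '' S), ‖β‖ ≤ ‖x‖) ↔
      ∃ D : ChainPartitionDatum M V e, D.Admissible ∧ (‖β‖ ^ 2)⁻¹ • β = D.betaHat :=
  minNormPoint_iff_exists_admissible_chainPartitionDatum_general e he horth β hβ
end

section
/- Let an admissible chain-partition datum for e_1,…,e_M be given with β̂ ≠ 0, and set β = β̂/‖β̂‖². Let S be the set of ordered pairs (i,j) such that i ∈ Δ_{h,m} and j ∈ Δ_{h,m+1} for some (h,m) ∈ J with (h,m+1) ∈ J. Then S is nonempty and β is the unique point of minimal norm of the convex hull of {e_i − e_j : (i,j) ∈ S}. -/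
open scoped RealInnerProductSpace BigOperators

section AuxCPD

variable {V : Type*} [NormedAddCommGroup V] [InnerProductSpace ℝ V]
variable {M : ℕ} {e : Fin M → V}

private lemma int_Icc_sum_succ {β : Type*} [AddCommMonoid β] (f : ℤ → β) {a b : ℤ} (hab : a ≤ b) :
    ∑ m ∈ Finset.Icc a b, f m = (∑ m ∈ Finset.Icc a (b - 1), f m) + f b := by
  have h1 : Finset.Icc a b = insert b (Finset.Icc a (b - 1)) := by
    ext x; simp only [Finset.mem_Icc, Finset.mem_insert]; omega
  rw [h1, Finset.sum_insert (by simp only [Finset.mem_Icc]; omega), add_comm]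

namespace AuxCPD

/-- `u h m = Σ_{j ∈ Δ_{h,m}} e_j/‖e_j‖²`. -/
noncomputable def u (D : ChainPartitionDatum M V e) (h : Fin D.L) (m : ℤ) : V :=
  ∑ j ∈ D.Δ h m, (‖e j‖ ^ 2)⁻¹ • e j

/-- normalized average vector of a block -/
noncomputable def w (D : ChainPartitionDatum M V e) (h : Fin D.L) (m : ℤ) : V :=
  (D.r h m)⁻¹ • u D h m

/-- partial sums of `(ε h − k) r h k` -/
noncomputable def g (D : ChainPartitionDatum M V e) (h : Fin D.L) (m : ℤ) : ℝ :=
  ∑ k ∈ Finset.Icc (D.l1 h) m, (D.eps h - (k : ℝ)) * D.r h k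

variable {D : ChainPartitionDatum M V e}

lemma r_pos (he : ∀ i, e i ≠ 0) {h : Fin D.L} {m : ℤ}
    (h1 : D.l1 h ≤ m) (h2 : m ≤ D.l2 h) : 0 < D.r h m := by
  refine Finset.sum_pos (fun j _ => ?_) (D.Δ_nonempty h m h1 h2)
  have : 0 < ‖e j‖ := norm_pos_iff.2 (he j)
  positivity

lemma g_l2 (he : ∀ i, e i ≠ 0) (h : Fin D.L) : g D h (D.l2 h) = 0 := by
  have hQ : 0 < ∑ m ∈ Finset.Icc (D.l1 h) (D.l2 h), D.r h m := by
    refine Finset.sum_pos (fun m hm => ?_) (Finset.nonempty_Icc.2 (D.l1_le_l2 h))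
    rw [Finset.mem_Icc] at hm
    exact r_pos he hm.1 hm.2
  have hsplit : g D h (D.l2 h) =
      D.eps h * (∑ m ∈ Finset.Icc (D.l1 h) (D.l2 h), D.r h m) -
        ∑ m ∈ Finset.Icc (D.l1 h) (D.l2 h), (m : ℝ) * D.r h m := by
    rw [g, Finset.mul_sum, ← Finset.sum_sub_distrib]
    exact Finset.sum_congr rfl fun k _ => by ring
  rw [hsplit, ChainPartitionDatum.eps, div_mul_cancel₀ _ (ne_of_gt hQ), sub_self]

lemma inner_betaHat (he : ∀ i, e i ≠ 0) (horth : ∀ i j : Fin M, i ≠ j → ⟪e i, e j⟫ = 0)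
    {h : Fin D.L} {m : ℤ} (h1 : D.l1 h ≤ m) (h2 : m ≤ D.l2 h) {i : Fin M}
    (hi : i ∈ D.Δ h m) : ⟪D.betaHat, e i⟫ = D.eps h - (m : ℝ) := by
  have key : ∀ (h' : Fin D.L) (m' : ℤ), D.l1 h' ≤ m' → m' ≤ D.l2 h' → (h', m') ≠ (h, m) →
      (∑ j ∈ D.Δ h' m', ((D.eps h' - (m' : ℝ)) / ‖e j‖ ^ 2) * ⟪e j, e i⟫) = 0 := by
    intro h' m' hm1 hm2 hne
    refine Finset.sum_eq_zero fun j hj => ?_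
    have hji : j ≠ i := by
      rintro rfl
      exact (Finset.disjoint_left.1 (D.Δ_disjoint h' m' h m hm1 hm2 h1 h2 hne) hj) hi
    rw [horth j i hji, mul_zero]
  rw [ChainPartitionDatum.betaHat]
  simp only [sum_inner, real_inner_smul_left]
  rw [Finset.sum_eq_single_of_mem h (Finset.mem_univ h) ?_]
  · rw [Finset.sum_eq_single_of_mem m (Finset.mem_Icc.2 ⟨h1, h2⟩) ?_]
    · rw [Finset.sum_eq_single_of_mem i hi
        (fun j _ hji => by rw [horth j i hji, mul_zero])]
      rw [real_inner_self_eq_norm_sq, div_mul_cancel₀]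
      exact pow_ne_zero 2 (norm_ne_zero_iff.2 (he i))
    · intro m' hm' hne
      rw [Finset.mem_Icc] at hm'
      exact key h m' hm'.1 hm'.2 (by simp [hne])
  · intro h' _ hne
    refine Finset.sum_eq_zero fun m' hm' => ?_
    rw [Finset.mem_Icc] at hm'
    exact key h' m' hm'.1 hm'.2 (by simp [hne])

lemma g_nonneg (he : ∀ i, e i ≠ 0) {h : Fin D.L} {m : ℤ}
    (h1 : D.l1 h ≤ m) (h2 : m ≤ D.l2 h) : 0 ≤ g D h m := by
  by_cases hc : (m : ℝ) ≤ D.eps h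
  · refine Finset.sum_nonneg fun k hk => ?_
    rw [Finset.mem_Icc] at hk
    have hk2 : (k : ℝ) ≤ (m : ℝ) := Int.cast_le.2 hk.2
    exact mul_nonneg (by linarith) (le_of_lt (r_pos he hk.1 (hk.2.trans h2)))
  · push_neg at hc
    have hsplit : g D h (D.l2 h) = g D h m + ∑ k ∈ Finset.Ioc m (D.l2 h),
        (D.eps h - (k : ℝ)) * D.r h k := by
      rw [g, g, ← Finset.sum_union]
      · congr 1
        ext x; simp only [Finset.mem_Icc, Finset.mem_union, Finset.mem_Ioc]; omega
      · rw [Finset.disjoint_left]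
        intro x hx hx'
        rw [Finset.mem_Icc] at hx; rw [Finset.mem_Ioc] at hx'
        omega
    have htail : ∑ k ∈ Finset.Ioc m (D.l2 h), (D.eps h - (k : ℝ)) * D.r h k ≤ 0 := by
      refine Finset.sum_nonpos fun k hk => ?_
      rw [Finset.mem_Ioc] at hk
      have hk2 : (m : ℝ) < (k : ℝ) := Int.cast_lt.2 hk.1
      exact mul_nonpos_of_nonpos_of_nonneg (by linarith)
        (le_of_lt (r_pos he (h1.trans hk.1.le) hk.2))
    have := g_l2 he h
    linarith [hsplit ▸ this]

lemma telescope (he : ∀ i, e i ≠ 0) (h : Fin D.L) :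
    ∀ b, D.l1 h ≤ b →
      (∑ m ∈ Finset.Icc (D.l1 h) (b - 1), g D h m • (w D h m - w D h (m + 1)))
        + g D h b • w D h b
      = ∑ m ∈ Finset.Icc (D.l1 h) b, ((D.eps h - (m : ℝ)) * D.r h m) • w D h m := by
  refine Int.le_induction ?_ ?_
  · rw [Finset.Icc_eq_empty (by omega), Finset.sum_empty, zero_add, Finset.Icc_self,
      Finset.sum_singleton, g, Finset.Icc_self, Finset.sum_singleton]
  · intro b hb ih
    have hb1 : D.l1 h ≤ b + 1 := by omega
    have e1 : b + 1 - 1 = b := by ring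
    rw [e1, int_Icc_sum_succ (fun m => g D h m • (w D h m - w D h (m + 1))) hb,
      int_Icc_sum_succ (fun m => ((D.eps h - (m : ℝ)) * D.r h m) • w D h m) hb1, e1, ← ih]
    have hg : g D h (b + 1) = g D h b + (D.eps h - ((b : ℝ) + 1)) * D.r h (b + 1) := by
      rw [g, g, int_Icc_sum_succ (fun k => (D.eps h - (k : ℝ)) * D.r h k) hb1, e1]
      push_cast
      ring
    rw [hg, add_smul, smul_sub]
    push_cast
    abel

lemma chain_sum (he : ∀ i, e i ≠ 0) (h : Fin D.L) :
    ∑ m ∈ Finset.Icc (D.l1 h) (D.l2 h - 1), g D h m • (w D h m - w D h (m + 1))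
      = ∑ m ∈ Finset.Icc (D.l1 h) (D.l2 h), (D.eps h - (m : ℝ)) • u D h m := by
  have := telescope he h (D.l2 h) (D.l1_le_l2 h)
  rw [g_l2 he h, zero_smul, add_zero] at this
  rw [this]
  refine Finset.sum_congr rfl fun m hm => ?_
  rw [Finset.mem_Icc] at hm
  have hr : D.r h m ≠ 0 := ne_of_gt (r_pos he hm.1 hm.2)
  rw [w, smul_smul, mul_assoc, mul_inv_cancel₀ hr, mul_one]

lemma betaHat_eq : D.betaHat = ∑ h : Fin D.L, ∑ m ∈ Finset.Icc (D.l1 h) (D.l2 h),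
    (D.eps h - (m : ℝ)) • u D h m := by
  rw [ChainPartitionDatum.betaHat]
  refine Finset.sum_congr rfl fun h _ => Finset.sum_congr rfl fun m _ => ?_
  rw [u, Finset.smul_sum]
  refine Finset.sum_congr rfl fun j _ => ?_
  rw [smul_smul, div_eq_mul_inv]

lemma vmem (he : ∀ i, e i ≠ 0) {s : Set V} {h : Fin D.L} {m : ℤ}
    (hm1 : D.l1 h ≤ m) (hm2 : m + 1 ≤ D.l2 h)
    (hsub : ∀ i ∈ D.Δ h m, ∀ j ∈ D.Δ h (m + 1), e i - e j ∈ s) :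
    w D h m - w D h (m + 1) ∈ convexHull ℝ s := by
  have hr1 : 0 < D.r h m := r_pos he hm1 (by omega)
  have hr2 : 0 < D.r h (m + 1) := r_pos he (by omega) hm2
  have hsw : ∑ p ∈ D.Δ h m ×ˢ D.Δ h (m + 1), (‖e p.1‖ ^ 2)⁻¹ * (‖e p.2‖ ^ 2)⁻¹
      = D.r h m * D.r h (m + 1) := by
    rw [Finset.sum_product, ChainPartitionDatum.r, ChainPartitionDatum.r,
      Finset.sum_mul_sum]
  have hsz : ∑ p ∈ D.Δ h m ×ˢ D.Δ h (m + 1),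
        ((‖e p.1‖ ^ 2)⁻¹ * (‖e p.2‖ ^ 2)⁻¹) • (e p.1 - e p.2)
      = D.r h (m + 1) • u D h m - D.r h m • u D h (m + 1) := by
    rw [Finset.sum_product]
    have expand : ∀ i ∈ D.Δ h m,
        ∑ j ∈ D.Δ h (m + 1), ((‖e i‖ ^ 2)⁻¹ * (‖e j‖ ^ 2)⁻¹) • (e i - e j)
        = D.r h (m + 1) • ((‖e i‖ ^ 2)⁻¹ • e i) - (‖e i‖ ^ 2)⁻¹ • u D h (m + 1) := by
      intro i _
      simp only [u, ChainPartitionDatum.r, Finset.smul_sum, Finset.sum_smul,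
        ← Finset.sum_sub_distrib]
      refine Finset.sum_congr rfl fun j _ => ?_
      module
    rw [Finset.sum_congr rfl expand, Finset.sum_sub_distrib, ← Finset.smul_sum,
      ← Finset.sum_smul]
    simp only [u, ChainPartitionDatum.r]
  have hmem := Finset.centerMass_mem_convexHull (D.Δ h m ×ˢ D.Δ h (m + 1))
    (w := fun p => (‖e p.1‖ ^ 2)⁻¹ * (‖e p.2‖ ^ 2)⁻¹)
    (fun p _ => by positivity) (by rw [hsw]; positivity)
    (z := fun p => e p.1 - e p.2)
    (fun p hp => by
      rw [Finset.mem_product] at hp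
      exact hsub p.1 hp.1 p.2 hp.2)
  rw [Finset.centerMass, hsw, hsz] at hmem
  convert hmem using 1
  rw [w, w, smul_sub, smul_smul, smul_smul, mul_inv]
  congr 1
  · congr 1
    rw [mul_assoc, inv_mul_cancel₀ (ne_of_gt hr2), mul_one]
  · congr 1
    rw [mul_comm (D.r h m)⁻¹, mul_assoc, inv_mul_cancel₀ (ne_of_gt hr1), mul_one]

end AuxCPD

end AuxCPD

/-- Given an admissible chain-partition datum with `β̂ ≠ 0` and
`β = β̂/‖β̂‖²`, the set `S` of pairs `(i,j)` with `i ∈ Δ_{h,m}`, `j ∈ Δ_{h,m+1}` for some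
`(h,m) ∈ J` with `(h,m+1) ∈ J` is nonempty, and `β` is the unique point of minimal norm
of the convex hull of `{e_i − e_j : (i,j) ∈ S}`. -/
theorem admissible_chainPartitionDatum_uniqueMinNormPoint
    {V : Type*} [NormedAddCommGroup V] [InnerProductSpace ℝ V]
    {M : ℕ} (hM : 0 < M) (e : Fin M → V) (he : ∀ i, e i ≠ 0)
    (horth : ∀ i j : Fin M, i ≠ j → ⟪e i, e j⟫ = 0)
    (D : ChainPartitionDatum M V e) (hD : D.Admissible)
    (hne : D.betaHat ≠ 0) (β : V) (hβ : β = (‖D.betaHat‖ ^ 2)⁻¹ • D.betaHat)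
    (S : Set (Fin M × Fin M))
    (hS : S = {p | ∃ (h : Fin D.L) (m : ℤ), D.l1 h ≤ m ∧ m + 1 ≤ D.l2 h ∧
        p.1 ∈ D.Δ h m ∧ p.2 ∈ D.Δ h (m + 1)}) :
    S.Nonempty ∧
      β ∈ convexHull ℝ ((fun p : Fin M × Fin M => e p.1 - e p.2) '' S) ∧
      (∀ x ∈ convexHull ℝ ((fun p : Fin M × Fin M => e p.1 - e p.2) '' S), ‖β‖ ≤ ‖x‖) ∧
      ∀ x ∈ convexHull ℝ ((fun p : Fin M × Fin M => e p.1 - e p.2) '' S),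
        (∀ y ∈ convexHull ℝ ((fun p : Fin M × Fin M => e p.1 - e p.2) '' S), ‖x‖ ≤ ‖y‖) →
          x = β := by
  set C : Set V := (fun p : Fin M × Fin M => e p.1 - e p.2) '' S with hC
  set N : ℝ := ‖D.betaHat‖ ^ 2 with hN
  have hNpos : 0 < N := by
    have : 0 < ‖D.betaHat‖ := norm_pos_iff.2 hne
    positivity
  -- every element of the convex hull has inner product 1 with betaHat
  have hplane : ∀ x ∈ convexHull ℝ C, ⟪D.betaHat, x⟫ = 1 := by
    have hconv : Convex ℝ {y : V | ⟪D.betaHat, y⟫ = 1} := by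
      intro x hx y hy a b ha hb hab
      simp only [Set.mem_setOf_eq] at hx hy ⊢
      rw [inner_add_right, real_inner_smul_right, real_inner_smul_right, hx, hy]
      linarith
    have hCsub : C ⊆ {y : V | ⟪D.betaHat, y⟫ = 1} := by
      rintro _ ⟨⟨i, j⟩, hp, rfl⟩
      rw [hS] at hp
      obtain ⟨h, m, hm1, hm2, hi, hj⟩ := hp
      simp only [Set.mem_setOf_eq]
      rw [inner_sub_right, AuxCPD.inner_betaHat he horth hm1 (by omega) hi,
        AuxCPD.inner_betaHat he horth (by omega : D.l1 h ≤ m + 1) hm2 hj]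
      push_cast
      ring
    exact fun x hx => convexHull_min hCsub hconv hx
  -- membership of β in the convex hull
  have hmemβ : β ∈ convexHull ℝ C := by
    set T : Finset ((_ : Fin D.L) × ℤ) :=
      Finset.univ.sigma (fun h : Fin D.L => Finset.Icc (D.l1 h) (D.l2 h - 1)) with hT
    set W : ((_ : Fin D.L) × ℤ) → ℝ := fun p => AuxCPD.g D p.1 p.2 with hW
    set Z : ((_ : Fin D.L) × ℤ) → V := fun p => AuxCPD.w D p.1 p.2 - AuxCPD.w D p.1 (p.2 + 1) with hZ
    have hW0 : ∀ p ∈ T, 0 ≤ W p := by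
      rintro ⟨h, m⟩ hp
      rw [hT, Finset.mem_sigma, Finset.mem_Icc] at hp
      dsimp only at hp
      show 0 ≤ AuxCPD.g D h m
      exact AuxCPD.g_nonneg he hp.2.1 (by omega)
    have hZK : ∀ p ∈ T, Z p ∈ convexHull ℝ C := by
      rintro ⟨h, m⟩ hp
      rw [hT, Finset.mem_sigma, Finset.mem_Icc] at hp
      dsimp only at hp
      show AuxCPD.w D h m - AuxCPD.w D h (m + 1) ∈ convexHull ℝ C
      refine AuxCPD.vmem he hp.2.1 (by omega) fun i hi j hj => ?_
      exact ⟨(i, j), by rw [hS]; exact ⟨h, m, hp.2.1, by omega, hi, hj⟩, rfl⟩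
    have hsum : ∑ p ∈ T, W p • Z p = D.betaHat := by
      rw [hT, Finset.sum_sigma]
      rw [AuxCPD.betaHat_eq]
      exact Finset.sum_congr rfl fun h _ => AuxCPD.chain_sum he h
    have htpos : 0 < ∑ p ∈ T, W p := by
      rcases (Finset.sum_nonneg hW0).lt_or_eq with h | h
      · exact h
      · exfalso
        apply hne
        rw [← hsum]
        refine Finset.sum_eq_zero fun p hp => ?_
        rw [((Finset.sum_eq_zero_iff_of_nonneg hW0).1 h.symm) p hp, zero_smul]
    have hmem' : T.centerMass W Z ∈ convexHull ℝ C :=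
      (convex_convexHull ℝ C).centerMass_mem hW0 htpos hZK
    rw [Finset.centerMass, hsum] at hmem'
    have hy1 : ⟪D.betaHat, (∑ p ∈ T, W p)⁻¹ • D.betaHat⟫ = 1 := hplane _ hmem'
    rw [real_inner_smul_right, real_inner_self_eq_norm_sq, ← hN] at hy1
    have htN : ∑ p ∈ T, W p = N := (inv_mul_eq_one₀ (ne_of_gt htpos)).1 hy1
    rw [hβ, ← htN]
    exact hmem'
  -- norm computations
  have hβnorm : ‖β‖ ^ 2 = N⁻¹ := by
    rw [hβ, norm_smul, mul_pow, Real.norm_eq_abs, sq_abs, ← hN]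
    field_simp
  have key : ∀ x ∈ convexHull ℝ C, ‖x - β‖ ^ 2 = ‖x‖ ^ 2 - ‖β‖ ^ 2 := by
    intro x hx
    have hip : ⟪x, β⟫ = N⁻¹ := by
      rw [real_inner_comm, hβ, real_inner_smul_left, hplane x hx, mul_one, hN]
    rw [norm_sub_sq_real, hip, hβnorm]
    ring
  refine ⟨?_, hmemβ, ?_, ?_⟩
  · by_contra hSne
    rw [Set.not_nonempty_iff_eq_empty] at hSne
    rw [hC, hSne, Set.image_empty, convexHull_empty] at hmemβ
    exact hmemβ
  · intro x hx
    have h1 := key x hx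
    have h2 : ‖β‖ ^ 2 ≤ ‖x‖ ^ 2 := by nlinarith [sq_nonneg ‖x - β‖]
    exact (pow_le_pow_iff_left₀ (norm_nonneg β) (norm_nonneg x) two_ne_zero).1 h2
  · intro x hx hmin
    have hxβ : ‖x‖ ≤ ‖β‖ := hmin β hmemβ
    have h2 : ‖x‖ ^ 2 ≤ ‖β‖ ^ 2 := by nlinarith [norm_nonneg x, norm_nonneg β]
    have h0 : ‖x - β‖ ^ 2 = 0 := le_antisymm (by rw [key x hx]; linarith) (by positivity)
    have hz : ‖x - β‖ = 0 := by
      have := pow_eq_zero_iff (two_ne_zero) |>.1 h0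
      exact this
    exact sub_eq_zero.1 (norm_eq_zero.1 hz)
end

section
/- Let an admissible chain-partition datum for e_1,…,e_M be given with β̂ ≠ 0, and set β = β̂/‖β̂‖². Suppose i ∈ Δ_{h,m} and j ∈ Δ_{h',m'} for (h,m), (h',m') ∈ J. Then ⟪β, e_i − e_j⟫ = ‖β‖² if and only if h' = h and m' = m + 1; and ⟪β, e_i − e_j⟫ ≥ ‖β‖² if and only if either m' ≥ m + 2, or m' = m + 1 and h' ≥ h. -/
/-!
Orthogonality of the `e_j` gives `⟪β̂, e_i⟫ = ε(h) − m` for `i ∈ Δ_{h,m}`, and `β` is a positive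
multiple of `β̂` with `⟪β, x⟫ = ‖β‖² ⟪β̂, x⟫`. Hence both conditions reduce to comparing
`(m' − m) + (ε(h) − ε(h'))` with `1`. Admissibility puts `ε(h) − ε(h')` strictly between `−1`
and `1`, so the integer part `m' − m` is forced, and strict monotonicity of `ε` translates the
remaining comparison of `ε(h)` with `ε(h')` into one of `h` with `h'`.
-/

open scoped RealInnerProductSpace BigOperators

section InnerProduct

variable {V : Type*} [NormedAddCommGroup V] [InnerProductSpace ℝ V]

lemma inner_inv_normSq_smul (v x : V) :
    ⟪(‖v‖ ^ 2)⁻¹ • v, x⟫ = ‖(‖v‖ ^ 2)⁻¹ • v‖ ^ 2 * ⟪v, x⟫ := by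
  rw [real_inner_smul_left, norm_smul, mul_pow, Real.norm_eq_abs, sq_abs]
  rcases eq_or_ne ‖v‖ 0 with hv | hv
  · simp [hv]
  · field_simp

lemma inner_sum_div_normSq_smul_of_orthogonal {ι : Type*} [DecidableEq ι] {e : ι → V}
    (he : ∀ i, e i ≠ 0) (horth : Pairwise fun i j => ⟪e i, e j⟫ = 0)
    (s : Finset ι) (c : ι → ℝ) (i : ι) :
    ⟪∑ j ∈ s, (c j / ‖e j‖ ^ 2) • e j, e i⟫ = if i ∈ s then c i else 0 := by
  rw [sum_inner, ← Finset.sum_ite_eq' s i c]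
  refine Finset.sum_congr rfl fun j _ => ?_
  rw [real_inner_smul_left]
  split_ifs with hji
  · rw [hji, real_inner_self_eq_norm_sq, div_mul_cancel₀ _ (by simpa using he i)]
  · rw [horth hji, mul_zero]

end InnerProduct

lemma intCast_sub_add_eq_one_iff {m m' : ℤ} {a a' : ℝ} (hd : |a - a'| < 1) :
    ((m' : ℝ) - m) + (a - a') = 1 ↔ a' = a ∧ m' = m + 1 := by
  rw [abs_lt] at hd
  constructor
  · intro hsum
    have hlt : m' - m < 2 := by
      have : ((m' - m : ℤ) : ℝ) < 2 := by push_cast; linarith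
      exact_mod_cast this
    have hgt : 0 < m' - m := by
      have : (0 : ℝ) < ((m' - m : ℤ) : ℝ) := by push_cast; linarith
      exact_mod_cast this
    obtain rfl : m' = m + 1 := by omega
    push_cast at hsum
    exact ⟨by linarith, rfl⟩
  · rintro ⟨rfl, rfl⟩
    push_cast
    ring

lemma one_le_intCast_sub_add_iff {m m' : ℤ} {a a' : ℝ} (hd : |a - a'| < 1) :
    1 ≤ ((m' : ℝ) - m) + (a - a') ↔ m + 2 ≤ m' ∨ (m' = m + 1 ∧ a' ≤ a) := by
  rw [abs_lt] at hd
  constructor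
  · intro hsum
    have hgt : 0 < m' - m := by
      have : (0 : ℝ) < ((m' - m : ℤ) : ℝ) := by push_cast; linarith
      exact_mod_cast this
    rcases (show m + 2 ≤ m' ∨ m' = m + 1 by omega) with hle | rfl
    · exact Or.inl hle
    · push_cast at hsum
      exact Or.inr ⟨rfl, by linarith⟩
  · rintro (hle | ⟨rfl, hle⟩)
    · have : (m : ℝ) + 2 ≤ m' := by exact_mod_cast hle
      linarith
    · push_cast
      linarith

namespace ChainPartitionDatum

variable {V : Type*} [NormedAddCommGroup V] [InnerProductSpace ℝ V] {M : ℕ} {e : Fin M → V}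
  (D : ChainPartitionDatum M V e)

lemma notMem_Δ_of_mem {h h' : Fin D.L} {m m' : ℤ} (hm₁ : D.l1 h ≤ m) (hm₂ : m ≤ D.l2 h)
    (hm'₁ : D.l1 h' ≤ m') (hm'₂ : m' ≤ D.l2 h') (hne : (h', m') ≠ (h, m)) {i : Fin M}
    (hi : i ∈ D.Δ h m) : i ∉ D.Δ h' m' := fun hi' =>
  Finset.disjoint_left.1 (D.Δ_disjoint h' m' h m hm'₁ hm'₂ hm₁ hm₂ hne) hi' hi

lemma inner_betaHat_of_mem (he : ∀ i, e i ≠ 0) (horth : ∀ i j : Fin M, i ≠ j → ⟪e i, e j⟫ = 0)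
    {h : Fin D.L} {m : ℤ} (hm₁ : D.l1 h ≤ m) (hm₂ : m ≤ D.l2 h) {i : Fin M}
    (hi : i ∈ D.Δ h m) :
    ⟪D.betaHat, e i⟫ = D.eps h - m := by
  classical
  simp only [betaHat, sum_inner,
    inner_sum_div_normSq_smul_of_orthogonal he horth _ (fun _ => D.eps _ - _)]
  rw [Finset.sum_eq_single_of_mem h (Finset.mem_univ h),
    Finset.sum_eq_single_of_mem m (Finset.mem_Icc.2 ⟨hm₁, hm₂⟩), if_pos hi]
  · intro m' hm' hne
    rw [Finset.mem_Icc] at hm'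
    rw [if_neg (D.notMem_Δ_of_mem hm₁ hm₂ hm'.1 hm'.2 (by simp [hne]) hi)]
  · intro h' _ hne
    refine Finset.sum_eq_zero fun m' hm' => ?_
    rw [Finset.mem_Icc] at hm'
    rw [if_neg (D.notMem_Δ_of_mem hm₁ hm₂ hm'.1 hm'.2 (by simp [hne]) hi)]

lemma Admissible.abs_eps_sub_lt_one {D : ChainPartitionDatum M V e} (hD : D.Admissible)
    (h h' : Fin D.L) : |D.eps h - D.eps h'| < 1 := by
  have := hD.1 h
  have := hD.1 h'
  rw [abs_lt]
  constructor <;> linarith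

end ChainPartitionDatum

theorem admissible_chainPartitionDatum_inner_sub_eq_iff_general
    {V : Type*} [NormedAddCommGroup V] [InnerProductSpace ℝ V]
    {M : ℕ} (e : Fin M → V) (he : ∀ i, e i ≠ 0)
    (horth : ∀ i j : Fin M, i ≠ j → ⟪e i, e j⟫ = 0)
    (D : ChainPartitionDatum M V e) (hD : D.Admissible)
    (hne : D.betaHat ≠ 0) (β : V) (hβ : β = (‖D.betaHat‖ ^ 2)⁻¹ • D.betaHat)
    (h h' : Fin D.L) (m m' : ℤ)
    (hm₁ : D.l1 h ≤ m) (hm₂ : m ≤ D.l2 h)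
    (hm'₁ : D.l1 h' ≤ m') (hm'₂ : m' ≤ D.l2 h')
    (i j : Fin M) (hi : i ∈ D.Δ h m) (hj : j ∈ D.Δ h' m') :
    (⟪β, e i - e j⟫ = ‖β‖ ^ 2 ↔ h' = h ∧ m' = m + 1) ∧
      (⟪β, e i - e j⟫ ≥ ‖β‖ ^ 2 ↔ m + 2 ≤ m' ∨ (m' = m + 1 ∧ h ≤ h')) := by
  have hβpos : 0 < ‖β‖ ^ 2 := by
    have : β ≠ 0 := hβ ▸ smul_ne_zero (by positivity) hne
    positivity
  have hinner : ⟪β, e i - e j⟫ = ‖β‖ ^ 2 * (((m' : ℝ) - m) + (D.eps h - D.eps h')) := by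
    rw [hβ, inner_inv_normSq_smul, inner_sub_right, D.inner_betaHat_of_mem he horth hm₁ hm₂ hi,
      D.inner_betaHat_of_mem he horth hm'₁ hm'₂ hj]
    ring
  have hd := hD.abs_eps_sub_lt_one h h'
  rw [hinner, mul_eq_left₀ hβpos.ne', ge_iff_le, le_mul_iff_one_le_right hβpos,
    intCast_sub_add_eq_one_iff hd, one_le_intCast_sub_add_iff hd, hD.2.injective.eq_iff,
    hD.2.le_iff_ge]
  exact ⟨Iff.rfl, Iff.rfl⟩

/-- For an admissible chain-partition datum with `β̂ ≠ 0`, `β = β̂/‖β̂‖²`,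
and `i ∈ Δ_{h,m}`, `j ∈ Δ_{h',m'}` with `(h,m), (h',m') ∈ J`: `⟪β, e_i − e_j⟫ = ‖β‖²` iff
`h' = h` and `m' = m+1`; and `⟪β, e_i − e_j⟫ ≥ ‖β‖²` iff `m' ≥ m+2`, or `m' = m+1` and
`h' ≥ h`. -/
theorem admissible_chainPartitionDatum_inner_sub_eq_iff
    {V : Type*} [NormedAddCommGroup V] [InnerProductSpace ℝ V]
    {M : ℕ} (hM : 0 < M) (e : Fin M → V) (he : ∀ i, e i ≠ 0)
    (horth : ∀ i j : Fin M, i ≠ j → ⟪e i, e j⟫ = 0)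
    (D : ChainPartitionDatum M V e) (hD : D.Admissible)
    (hne : D.betaHat ≠ 0) (β : V) (hβ : β = (‖D.betaHat‖ ^ 2)⁻¹ • D.betaHat)
    (h h' : Fin D.L) (m m' : ℤ)
    (hm₁ : D.l1 h ≤ m) (hm₂ : m ≤ D.l2 h)
    (hm'₁ : D.l1 h' ≤ m') (hm'₂ : m' ≤ D.l2 h')
    (i j : Fin M) (hi : i ∈ D.Δ h m) (hj : j ∈ D.Δ h' m') :
    (⟪β, e i - e j⟫ = ‖β‖ ^ 2 ↔ h' = h ∧ m' = m + 1) ∧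
      (⟪β, e i - e j⟫ ≥ ‖β‖ ^ 2 ↔ m + 2 ≤ m' ∨ (m' = m + 1 ∧ h ≤ h')) :=
  admissible_chainPartitionDatum_inner_sub_eq_iff_general e he horth D hD hne β hβ h h' m m' hm₁ hm₂
    hm'₁ hm'₂ i j hi hj
end

section
/- Let A_1, …, A_L be nonempty finite subsets of V that lie in mutually orthogonal subspaces, i.e. ⟪a, a'⟫ = 0 whenever a ∈ A_h, a' ∈ A_{h'} and h ≠ h'. For each h let β_h be the point of minimal norm of the convex hull of A_h, and assume β_h ≠ 0 for all h. Then the point β of minimal norm of the convex hull of A_1 ∪ … ∪ A_L is given by β = (Σ_{h=1}^{L} ‖β_h‖^{−2})^{−1} · Σ_{h=1}^{L} β_h/‖β_h‖², and moreover ‖β‖² = (Σ_{h=1}^{L} ‖β_h‖^{−2})^{−1}. -/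
open scoped RealInnerProductSpace BigOperators

/-- Variational inequality for a minimal-norm point of a convex set. -/
lemma minNorm_inner_ge {V : Type*} [NormedAddCommGroup V] [InnerProductSpace ℝ V]
    {C : Set V} (hC : Convex ℝ C) {b : V} (hb : b ∈ C)
    (hmin : ∀ x ∈ C, ‖b‖ ≤ ‖x‖) {x : V} (hx : x ∈ C) :
    ‖b‖ ^ 2 ≤ ⟪b, x⟫ := by
  by_contra hlt
  push_neg at hlt
  have hc0 : ⟪b, x - b⟫ < 0 := by
    rw [inner_sub_right, real_inner_self_eq_norm_sq]; linarith
  set c : ℝ := ⟪b, x - b⟫ with hc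
  have hxb : x ≠ b := by
    intro h
    exact absurd (by rw [hc, h, sub_self, inner_zero_right]) hc0.ne
  have hd0 : (0:ℝ) < ‖x - b‖ ^ 2 := by
    have h1 : 0 < ‖x - b‖ := norm_pos_iff.mpr (sub_ne_zero.mpr hxb)
    positivity
  set d : ℝ := ‖x - b‖ ^ 2 with hd
  set t : ℝ := min 1 (-c / d) with ht
  have ht0 : 0 < t := lt_min one_pos (div_pos (by linarith) hd0)
  have ht1 : t ≤ 1 := min_le_left _ _
  have htd : t * d ≤ -c := by
    have h2 : t ≤ -c / d := min_le_right _ _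
    calc t * d ≤ (-c / d) * d := by nlinarith
    _ = -c := by field_simp
  have hmem : b + t • (x - b) ∈ C := by
    have h := hC hb hx (by linarith : (0:ℝ) ≤ 1 - t) ht0.le (by ring)
    convert h using 1
    module
  have hle := hmin _ hmem
  have hexp : ‖b + t • (x - b)‖ ^ 2 = ‖b‖ ^ 2 + 2 * (t * c) + t ^ 2 * d := by
    rw [norm_add_sq_real, real_inner_smul_right, norm_smul, mul_pow,
      Real.norm_eq_abs, abs_of_pos ht0, ← hc, ← hd]
  nlinarith [norm_nonneg b, norm_nonneg (b + t • (x - b))]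

/-- If `A_1, …, A_L` are nonempty finite subsets of `V` lying in mutually
orthogonal subspaces, `β_h` is the point of minimal norm of the convex hull of `A_h` and
`β_h ≠ 0` for every `h`, then the point `β` of minimal norm of the convex hull of
`A_1 ∪ … ∪ A_L` is `(Σ_h ‖β_h‖⁻²)⁻¹ • Σ_h β_h/‖β_h‖²`, and `‖β‖² = (Σ_h ‖β_h‖⁻²)⁻¹`. -/
theorem minNormPoint_union_orthogonal
    {V : Type*} [NormedAddCommGroup V] [InnerProductSpace ℝ V]
    {L : ℕ} (hL : 0 < L) (A : Fin L → Finset V)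
    (hA : ∀ h, (A h).Nonempty)
    (horth : ∀ h h' : Fin L, h ≠ h' → ∀ a ∈ A h, ∀ a' ∈ A h', ⟪a, a'⟫ = 0)
    (b : Fin L → V)
    (hbmem : ∀ h, b h ∈ convexHull ℝ (A h : Set V))
    (hbmin : ∀ h, ∀ x ∈ convexHull ℝ (A h : Set V), ‖b h‖ ≤ ‖x‖)
    (hb0 : ∀ h, b h ≠ 0)
    (β : V)
    (hβmem : β ∈ convexHull ℝ (⋃ h, (A h : Set V)))
    (hβmin : ∀ x ∈ convexHull ℝ (⋃ h, (A h : Set V)), ‖β‖ ≤ ‖x‖) :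
    β = (∑ h, (‖b h‖ ^ 2)⁻¹)⁻¹ • ∑ h, (‖b h‖ ^ 2)⁻¹ • b h ∧
      ‖β‖ ^ 2 = (∑ h, (‖b h‖ ^ 2)⁻¹)⁻¹ := by
  classical
  have hb2pos : ∀ h : Fin L, (0:ℝ) < ‖b h‖ ^ 2 := by
    intro h
    have h1 : 0 < ‖b h‖ := norm_pos_iff.mpr (hb0 h)
    positivity
  have hwpos : ∀ h : Fin L, (0:ℝ) < (‖b h‖ ^ 2)⁻¹ := fun h => inv_pos.mpr (hb2pos h)
  set S : ℝ := ∑ h, (‖b h‖ ^ 2)⁻¹ with hS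
  have hune : (Finset.univ : Finset (Fin L)).Nonempty := by
    simpa [Finset.univ_nonempty_iff] using Fin.pos_iff_nonempty.mp hL
  have hSpos : 0 < S := Finset.sum_pos (fun h _ => hwpos h) hune
  set γ : V := S⁻¹ • ∑ h, (‖b h‖ ^ 2)⁻¹ • b h with hγ
  -- orthogonality of b h with elements of A h'
  have horth1 : ∀ h h' : Fin L, h ≠ h' → ∀ a ∈ A h', ⟪b h, a⟫ = 0 := by
    intro h h' hne' a ha
    have hsub : convexHull ℝ (A h : Set V) ⊆ {y : V | ⟪y, a⟫ = 0} := by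
      apply convexHull_min
      · intro y hy
        exact horth h h' hne' y hy a ha
      · exact convex_hyperplane (⟨fun u v => inner_add_left u v a,
          fun c u => real_inner_smul_left u a c⟩ : IsLinearMap ℝ fun y : V => ⟪y, a⟫) 0
    exact hsub (hbmem h)
  have horth2 : ∀ h h' : Fin L, h ≠ h' → ⟪b h, b h'⟫ = 0 := by
    intro h h' hne'
    have hsub : convexHull ℝ (A h' : Set V) ⊆ {y : V | ⟪b h, y⟫ = 0} := by
      apply convexHull_min
      · intro y hy
        exact horth1 h h' hne' y hy
      · exact convex_hyperplane (⟨fun u v => inner_add_right (b h) u v,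
          fun c u => real_inner_smul_right (b h) u c⟩ : IsLinearMap ℝ fun y : V => ⟪b h, y⟫) 0
    exact hsub (hbmem h')
  have hkey : ∀ h : Fin L, ∀ x ∈ convexHull ℝ (A h : Set V), ‖b h‖ ^ 2 ≤ ⟪b h, x⟫ :=
    fun h x hx => minNorm_inner_ge (convex_convexHull _ _) (hbmem h) (hbmin h) hx
  -- inner products with γ
  have hinner : ∀ x : V, ⟪γ, x⟫ = S⁻¹ * ∑ h, (‖b h‖ ^ 2)⁻¹ * ⟪b h, x⟫ := by
    intro x
    rw [hγ, real_inner_smul_left, sum_inner]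
    congr 1
    exact Finset.sum_congr rfl fun h _ => real_inner_smul_left _ _ _
  -- γ vs points of the union's hull
  have hγa : ∀ x ∈ convexHull ℝ (⋃ h, (A h : Set V)), S⁻¹ ≤ ⟪γ, x⟫ := by
    intro x hx
    have hsub : convexHull ℝ (⋃ h, (A h : Set V)) ⊆ {y : V | S⁻¹ ≤ ⟪γ, y⟫} := by
      apply convexHull_min
      · intro a ha
        obtain ⟨h, hah⟩ := Set.mem_iUnion.mp ha
        have : S⁻¹ ≤ ⟪γ, a⟫ := by
          rw [hinner]
          have hsum : ∑ h', (‖b h'‖ ^ 2)⁻¹ * ⟪b h', a⟫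
              = (‖b h‖ ^ 2)⁻¹ * ⟪b h, a⟫ := by
            apply Finset.sum_eq_single
            · intro h' _ hne'
              rw [horth1 h' h hne' a hah, mul_zero]
            · intro habs; exact absurd (Finset.mem_univ h) habs
          rw [hsum]
          have hge := hkey h a (subset_convexHull ℝ _ hah)
          have h1 : (1:ℝ) ≤ (‖b h‖ ^ 2)⁻¹ * ⟪b h, a⟫ := by
            rw [← inv_mul_cancel₀ (hb2pos h).ne']
            exact mul_le_mul_of_nonneg_left hge (le_of_lt (hwpos h))
          nlinarith [inv_pos.mpr hSpos]
        exact this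
      · exact convex_halfSpace_ge (⟨fun u v => inner_add_right γ u v,
          fun c u => real_inner_smul_right γ u c⟩ : IsLinearMap ℝ fun y : V => ⟪γ, y⟫) S⁻¹
    exact hsub hx
  -- inner of b h with γ
  have hbγ : ∀ h : Fin L, ⟪b h, γ⟫ = S⁻¹ := by
    intro h
    rw [hγ, real_inner_smul_right, inner_sum]
    have hsum : ∑ h', ⟪b h, (‖b h'‖ ^ 2)⁻¹ • b h'⟫ = 1 := by
      have : ∀ h' : Fin L, ⟪b h, (‖b h'‖ ^ 2)⁻¹ • b h'⟫
          = (‖b h'‖ ^ 2)⁻¹ * ⟪b h, b h'⟫ := fun h' => real_inner_smul_right _ _ _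
      rw [Finset.sum_congr rfl fun h' _ => this h']
      rw [Finset.sum_eq_single h]
      · rw [real_inner_self_eq_norm_sq, inv_mul_cancel₀ (hb2pos h).ne']
      · intro h' _ hne'
        rw [horth2 h h' (fun e => hne' e.symm), mul_zero]
      · intro habs; exact absurd (Finset.mem_univ h) habs
    rw [hsum, mul_one]
  -- norm of γ
  have hγnorm : ‖γ‖ ^ 2 = S⁻¹ := by
    rw [← real_inner_self_eq_norm_sq, hinner]
    have : ∑ h, (‖b h‖ ^ 2)⁻¹ * ⟪b h, γ⟫ = S * S⁻¹ := by
      rw [Finset.sum_congr rfl fun h _ => by rw [hbγ h], ← Finset.sum_mul, ← hS]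
    rw [this]
    field_simp
  -- γ is in the convex hull of the union
  have hγmem : γ ∈ convexHull ℝ (⋃ h, (A h : Set V)) := by
    have heq : γ = ∑ h, (S⁻¹ * (‖b h‖ ^ 2)⁻¹) • b h := by
      rw [hγ, Finset.smul_sum]
      exact Finset.sum_congr rfl fun h _ => smul_smul _ _ _
    rw [heq]
    apply (convex_convexHull ℝ _).sum_mem
    · intro h _
      positivity
    · rw [← Finset.mul_sum, ← hS, inv_mul_cancel₀ hSpos.ne']
    · intro h _
      exact convexHull_mono (Set.subset_iUnion (fun h => (A h : Set V)) h) (hbmem h)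
  -- conclude
  have hle : ‖β‖ ≤ ‖γ‖ := hβmin γ hγmem
  have hge : ‖γ‖ ^ 2 ≤ ⟪γ, β⟫ := by
    rw [hγnorm]; exact hγa β hβmem
  have hβγ : β = γ := by
    have hsq : ‖β - γ‖ ^ 2 = ‖β‖ ^ 2 - 2 * ⟪β, γ⟫ + ‖γ‖ ^ 2 := norm_sub_sq_real β γ
    have hcomm : ⟪β, γ⟫ = ⟪γ, β⟫ := (real_inner_comm β γ).symm
    have h0 : ‖β - γ‖ ^ 2 ≤ 0 := by nlinarith [norm_nonneg β, norm_nonneg γ]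
    have : ‖β - γ‖ = 0 := by nlinarith [norm_nonneg (β - γ)]
    rw [sub_eq_zero.mp (norm_eq_zero.mp this)]
  constructor
  · rw [hβγ, hγ]
  · rw [hβγ, hγnorm]
end

section
/- Let A be a nonempty finite subset of V and let β be the point of minimal norm of the convex hull of A. If β = Σ_{a ∈ A} λ_a a for real numbers λ_a with λ_a > 0 for every a ∈ A and Σ_{a ∈ A} λ_a = 1, then ⟪a, β⟫ = ‖β‖² for every a ∈ A. -/
open scoped RealInnerProductSpace BigOperators

/-- Let `A` be a nonempty finite subset of `V` and `β` the point of minimal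
norm of the convex hull of `A`. If `β = Σ_{a ∈ A} λ_a a` with all `λ_a > 0` and
`Σ_{a ∈ A} λ_a = 1`, then `⟪a, β⟫ = ‖β‖²` for every `a ∈ A`. -/
theorem inner_minNormPoint_eq_of_pos_coeffs
    {V : Type*} [NormedAddCommGroup V] [InnerProductSpace ℝ V]
    (A : Finset V) (hA : A.Nonempty) (β : V)
    (hmem : β ∈ convexHull ℝ (A : Set V))
    (hmin : ∀ x ∈ convexHull ℝ (A : Set V), ‖β‖ ≤ ‖x‖)
    (lam : V → ℝ) (hpos : ∀ a ∈ A, 0 < lam a) (hsum : ∑ a ∈ A, lam a = 1)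
    (hrep : β = ∑ a ∈ A, lam a • a) :
    ∀ a ∈ A, ⟪a, β⟫ = ‖β‖ ^ 2 := by
  set K : Set V := convexHull ℝ (A : Set V) with hK
  haveI : Nonempty K := ⟨⟨β, hmem⟩⟩
  -- β is a minimizer, expressed via infimum
  have hinf : ‖(0 : V) - β‖ = ⨅ w : K, ‖(0 : V) - w‖ := by
    apply le_antisymm
    · apply le_ciInf
      intro w
      simpa using hmin w w.2
    · exact ciInf_le ⟨0, by rintro _ ⟨w, rfl⟩; exact norm_nonneg _⟩ (⟨β, hmem⟩ : K)
  have hchar := (norm_eq_iInf_iff_real_inner_le_zero (convex_convexHull ℝ _) hmem).1 hinf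
  -- key: ∀ w ∈ K, ⟪β, w⟫ ≥ ‖β‖²
  have key : ∀ w ∈ K, ‖β‖ ^ 2 ≤ ⟪w, β⟫ := by
    intro w hw
    have := hchar w hw
    have h2 : ⟪-β, w - β⟫ ≤ 0 := by simpa using this
    rw [inner_neg_left, inner_sub_right, real_inner_self_eq_norm_sq] at h2
    rw [real_inner_comm]
    linarith
  have hsub : ∀ a ∈ A, (a : V) ∈ K := fun a ha => subset_convexHull ℝ _ ha
  have hterm : ∀ a ∈ A, lam a * ‖β‖ ^ 2 ≤ lam a * ⟪a, β⟫ := fun a ha =>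
    mul_le_mul_of_nonneg_left (key a (hsub a ha)) (hpos a ha).le
  have hsumeq : ∑ a ∈ A, lam a * ‖β‖ ^ 2 = ∑ a ∈ A, lam a * ⟪a, β⟫ := by
    rw [← Finset.sum_mul, hsum, one_mul]
    have : ⟪β, β⟫ = ∑ a ∈ A, lam a * ⟪a, β⟫ := by
      conv_lhs => rw [hrep]
      rw [sum_inner]
      refine Finset.sum_congr rfl fun a _ => ?_
      rw [real_inner_smul_left, ← hrep]
    rw [← this, real_inner_self_eq_norm_sq]
  have heach := (Finset.sum_eq_sum_iff_of_le hterm).1 hsumeq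
  intro a ha
  have := heach a ha
  have hl := hpos a ha
  nlinarith [this]
end

section
/- For every m with l_1 ≤ m ≤ l_2 − 1 one has Σ_{k=l_1}^{m} (ε − k) r_k > 0. -/
/-!
The deviations `(ε - k) r_k` sum to zero over `[l1, l2]`. If `m < ε`, every term of the partial
sum up to `m` is positive. Otherwise every term of the complementary sum over `(m, l2]` is
negative, and the partial sum is minus that sum.
-/

namespace Finset

variable {ι : Type*} {s : Finset ι} {w x : ι → ℝ}

theorem sum_weightedMean_sub_mul_eq_zero (hw : ∑ i ∈ s, w i ≠ 0) :
    ∑ i ∈ s, ((∑ j ∈ s, x j * w j) / (∑ j ∈ s, w j) - x i) * w i = 0 := by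
  simp only [sub_mul, sum_sub_distrib]
  rw [← mul_sum, div_mul_cancel₀ _ hw, sub_self]

theorem sum_filter_le_sub_mul_pos {ε c : ℝ} (hsum : ∑ i ∈ s, (ε - x i) * w i = 0)
    (hw : ∀ i ∈ s, 0 < w i) (hlow : ∃ i ∈ s, x i ≤ c) (hhigh : ∃ i ∈ s, c < x i) :
    0 < ∑ i ∈ s with x i ≤ c, (ε - x i) * w i := by
  rcases lt_or_ge c ε with hcε | hεc
  · obtain ⟨i, hi, hic⟩ := hlow
    refine sum_pos (fun j hj => ?_) ⟨i, mem_filter.2 ⟨hi, hic⟩⟩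
    obtain ⟨hjs, hjc⟩ := mem_filter.1 hj
    exact mul_pos (by linarith) (hw j hjs)
  · obtain ⟨i, hi, hci⟩ := hhigh
    have hupper : ∑ i ∈ s with ¬x i ≤ c, (ε - x i) * w i < 0 := by
      refine sum_neg (fun j hj => ?_) ⟨i, mem_filter.2 ⟨hi, not_le.2 hci⟩⟩
      obtain ⟨hjs, hjc⟩ := mem_filter.1 hj
      exact mul_neg_of_neg_of_pos (by linarith [not_le.1 hjc]) (hw j hjs)
    linarith [sum_filter_add_sum_filter_not s (fun i => x i ≤ c) fun i => (ε - x i) * w i]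

end Finset

theorem partial_sum_weighted_mean_pos_general
    (l1 l2 : ℤ) (r : ℤ → ℝ)
    (hr : ∀ k ∈ Finset.Icc l1 l2, 0 < r k) (ε : ℝ)
    (hε : ε = (∑ k ∈ Finset.Icc l1 l2, (k : ℝ) * r k) / ∑ k ∈ Finset.Icc l1 l2, r k) :
    ∀ m, l1 ≤ m → m ≤ l2 - 1 → 0 < ∑ k ∈ Finset.Icc l1 m, (ε - (k : ℝ)) * r k := by
  intro m hm1 hm2
  have hmass : ∑ k ∈ Finset.Icc l1 l2, r k ≠ 0 :=
    (Finset.sum_pos hr (Finset.nonempty_Icc.2 (by omega))).ne'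
  have hlower : {k ∈ Finset.Icc l1 l2 | ((k : ℤ) : ℝ) ≤ m} = Finset.Icc l1 m := by
    ext k
    simp only [Finset.mem_filter, Finset.mem_Icc, Int.cast_le]
    omega
  rw [← hlower]
  refine Finset.sum_filter_le_sub_mul_pos ?_ hr ⟨m, ?_, le_rfl⟩ ⟨l2, ?_, ?_⟩
  · exact hε ▸ Finset.sum_weightedMean_sub_mul_eq_zero hmass
  · exact Finset.mem_Icc.2 ⟨hm1, by omega⟩
  · exact Finset.mem_Icc.2 ⟨by omega, le_rfl⟩
  · exact_mod_cast (by omega : m < l2)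

/-- If `ε` is the `r`-weighted mean of the integers `l1, …, l2` (with
weights `r_k > 0`), then for every `m` with `l1 ≤ m ≤ l2 − 1` one has
`Σ_{k=l1}^{m} (ε − k) r_k > 0`. -/
theorem partial_sum_weighted_mean_pos
    (l1 l2 : ℤ) (hl : l1 ≤ l2) (r : ℤ → ℝ)
    (hr : ∀ k ∈ Finset.Icc l1 l2, 0 < r k) (ε : ℝ)
    (hε : ε = (∑ k ∈ Finset.Icc l1 l2, (k : ℝ) * r k) / ∑ k ∈ Finset.Icc l1 l2, r k) :
    ∀ m, l1 ≤ m → m ≤ l2 - 1 → 0 < ∑ k ∈ Finset.Icc l1 m, (ε - (k : ℝ)) * r k :=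
  partial_sum_weighted_mean_pos_general l1 l2 r hr ε hε
end

section
/- Let an admissible chain-partition datum for e_1,…,e_M be given with β̂ ≠ 0, and set β = β̂/‖β̂‖². If j_1 ∈ Δ_{h_1,m_1} and j_2 ∈ Δ_{h_2,m_2} for (h_1,m_1), (h_2,m_2) ∈ J, then ⟪β, e_{j_1}⟫ < ⟪β, e_{j_2}⟫ if and only if (h_1,m_1) is strictly greater than (h_2,m_2) in the Hebrew lexicographic order, i.e. if and only if m_1 > m_2, or m_1 = m_2 and h_1 > h_2. -/
open scoped RealInnerProductSpace BigOperators

/-! By orthogonality, `⟪β̂, e_j⟫ = ε(h) − m` for `j ∈ Δ_{h,m}`, because `j` lies in exactly one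
block. All `ε(h)` lie in `[−1/2, 1/2)`, so any two differ by less than one; hence comparing
`ε(h₁) − m₁` with `ε(h₂) − m₂` compares `m` first and only on a tie `ε`, which is strictly
antitone in `h`. -/

lemma sub_intCast_lt_sub_intCast_iff {a b : ℝ} (hab : |a - b| < 1) (m n : ℤ) :
    a - m < b - n ↔ n < m ∨ (m = n ∧ a < b) := by
  obtain ⟨hab₁, hab₂⟩ := abs_sub_lt_iff.mp hab
  rcases lt_trichotomy m n with hmn | rfl | hmn
  · have : (m : ℝ) + 1 ≤ n := by exact_mod_cast hmn
    constructor
    · intro; linarith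
    · rintro (h | ⟨rfl, _⟩) <;> omega
  · simp
  · have : (n : ℝ) + 1 ≤ m := by exact_mod_cast hmn
    exact ⟨fun _ ↦ Or.inl hmn, fun _ ↦ by linarith⟩

lemma inner_div_norm_sq_smul_eq_ite {V ι : Type*} [NormedAddCommGroup V]
    [InnerProductSpace ℝ V] [DecidableEq ι] {e : ι → V} (he : ∀ i, e i ≠ 0)
    (horth : ∀ i j, i ≠ j → ⟪e i, e j⟫ = 0) (c : ℝ) (i j : ι) :
    ⟪(c / ‖e i‖ ^ 2) • e i, e j⟫ = if i = j then c else 0 := by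
  split_ifs with hij
  · subst hij
    have : ‖e i‖ ≠ 0 := norm_ne_zero_iff.mpr (he i)
    rw [real_inner_smul_left, real_inner_self_eq_norm_sq, div_mul_cancel₀ _ (by positivity)]
  · rw [real_inner_smul_left, horth i j hij, mul_zero]

namespace ChainPartitionDatum

variable {V : Type*} [NormedAddCommGroup V] [InnerProductSpace ℝ V]
  {M : ℕ} {e : Fin M → V} (D : ChainPartitionDatum M V e)

lemma eq_of_mem_Δ_of_mem_Δ {h h' : Fin D.L} {m m' : ℤ}
    (hm : m ∈ Finset.Icc (D.l1 h) (D.l2 h)) (hm' : m' ∈ Finset.Icc (D.l1 h') (D.l2 h'))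
    {j : Fin M} (hj : j ∈ D.Δ h m) (hj' : j ∈ D.Δ h' m') : (h, m) = (h', m') := by
  rw [Finset.mem_Icc] at hm hm'
  by_contra hne
  exact Finset.disjoint_left.mp (D.Δ_disjoint h m h' m' hm.1 hm.2 hm'.1 hm'.2 hne) hj hj'

lemma inner_betaHat_eq (he : ∀ i, e i ≠ 0) (horth : ∀ i j : Fin M, i ≠ j → ⟪e i, e j⟫ = 0)
    {h₀ : Fin D.L} {m₀ : ℤ} (hm : D.l1 h₀ ≤ m₀) (hm' : m₀ ≤ D.l2 h₀)
    {j₀ : Fin M} (hj₀ : j₀ ∈ D.Δ h₀ m₀) :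
    ⟪D.betaHat, e j₀⟫ = D.eps h₀ - m₀ := by
  have hm₀ : m₀ ∈ Finset.Icc (D.l1 h₀) (D.l2 h₀) := Finset.mem_Icc.mpr ⟨hm, hm'⟩
  simp_rw [betaHat, sum_inner, inner_div_norm_sq_smul_eq_ite he horth, Finset.sum_ite_eq']
  rw [Finset.sum_eq_single h₀, Finset.sum_eq_single_of_mem m₀ hm₀, if_pos hj₀]
  · intro m hm hne
    exact if_neg fun hj ↦ hne (Prod.ext_iff.mp (D.eq_of_mem_Δ_of_mem_Δ hm hm₀ hj hj₀)).2
  · intro h _ hne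
    refine Finset.sum_eq_zero fun m hm ↦ if_neg fun hj ↦ hne ?_
    exact (Prod.ext_iff.mp (D.eq_of_mem_Δ_of_mem_Δ hm hm₀ hj hj₀)).1
  · exact fun h ↦ absurd (Finset.mem_univ h₀) h

end ChainPartitionDatum

theorem inner_beta_lt_iff_hebrew_gt_general
    {V : Type*} [NormedAddCommGroup V] [InnerProductSpace ℝ V]
    {M : ℕ} (e : Fin M → V) (he : ∀ i, e i ≠ 0)
    (horth : ∀ i j : Fin M, i ≠ j → ⟪e i, e j⟫ = 0)
    (D : ChainPartitionDatum M V e) (hD : D.Admissible)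
    (hne : D.betaHat ≠ 0) (β : V) (hβ : β = (‖D.betaHat‖ ^ 2)⁻¹ • D.betaHat)
    (h₁ h₂ : Fin D.L) (m₁ m₂ : ℤ)
    (hm₁ : D.l1 h₁ ≤ m₁) (hm₁' : m₁ ≤ D.l2 h₁)
    (hm₂ : D.l1 h₂ ≤ m₂) (hm₂' : m₂ ≤ D.l2 h₂)
    (j₁ j₂ : Fin M) (hj₁ : j₁ ∈ D.Δ h₁ m₁) (hj₂ : j₂ ∈ D.Δ h₂ m₂) :
    ⟪β, e j₁⟫ < ⟪β, e j₂⟫ ↔ m₂ < m₁ ∨ (m₁ = m₂ ∧ h₂ < h₁) := by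
  have hscale : 0 < (‖D.betaHat‖ ^ 2)⁻¹ := by
    have := norm_pos_iff.mpr hne
    positivity
  have heps_close : |D.eps h₁ - D.eps h₂| < 1 := by
    obtain ⟨h₁_ge, h₁_lt⟩ := hD.1 h₁
    obtain ⟨h₂_ge, h₂_lt⟩ := hD.1 h₂
    exact abs_sub_lt_iff.mpr ⟨by linarith, by linarith⟩
  rw [hβ, real_inner_smul_left, real_inner_smul_left, mul_lt_mul_iff_right₀ hscale,
    D.inner_betaHat_eq he horth hm₁ hm₁' hj₁, D.inner_betaHat_eq he horth hm₂ hm₂' hj₂,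
    sub_intCast_lt_sub_intCast_iff heps_close, hD.2.lt_iff_gt]

/-- For an admissible chain-partition datum with `β̂ ≠ 0` and
`β = β̂/‖β̂‖²`, if `j₁ ∈ Δ_{h₁,m₁}` and `j₂ ∈ Δ_{h₂,m₂}` with `(h₁,m₁), (h₂,m₂) ∈ J`, then
`⟪β, e_{j₁}⟫ < ⟪β, e_{j₂}⟫` iff `(h₁,m₁)` is strictly greater than `(h₂,m₂)` in the Hebrew
lexicographic order, i.e. iff `m₁ > m₂`, or `m₁ = m₂` and `h₁ > h₂`. -/
theorem inner_beta_lt_iff_hebrew_gt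
    {V : Type*} [NormedAddCommGroup V] [InnerProductSpace ℝ V]
    {M : ℕ} (hM : 0 < M) (e : Fin M → V) (he : ∀ i, e i ≠ 0)
    (horth : ∀ i j : Fin M, i ≠ j → ⟪e i, e j⟫ = 0)
    (D : ChainPartitionDatum M V e) (hD : D.Admissible)
    (hne : D.betaHat ≠ 0) (β : V) (hβ : β = (‖D.betaHat‖ ^ 2)⁻¹ • D.betaHat)
    (h₁ h₂ : Fin D.L) (m₁ m₂ : ℤ)
    (hm₁ : D.l1 h₁ ≤ m₁) (hm₁' : m₁ ≤ D.l2 h₁)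
    (hm₂ : D.l1 h₂ ≤ m₂) (hm₂' : m₂ ≤ D.l2 h₂)
    (j₁ j₂ : Fin M) (hj₁ : j₁ ∈ D.Δ h₁ m₁) (hj₂ : j₂ ∈ D.Δ h₂ m₂) :
    ⟪β, e j₁⟫ < ⟪β, e j₂⟫ ↔ m₂ < m₁ ∨ (m₁ = m₂ ∧ h₂ < h₁) :=
  inner_beta_lt_iff_hebrew_gt_general e he horth D hD hne β hβ h₁ h₂ m₁ m₂ hm₁ hm₁' hm₂ hm₂' j₁ j₂
    hj₁ hj₂
end

section
/- Suppose two admissible chain-partition data for e_1,…,e_M, with data (L, l_1, l_2, J, Δ) and (L', l_1', l_2', J', Δ'), determine the same vector β̂ = β̂'. Then the two data coincide: L = L', l_1 = l_1', l_2 = l_2' (so J = J'), and Δ_{h,m} = Δ'_{h,m} for every (h,m) ∈ J. -/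
open scoped RealInnerProductSpace BigOperators

namespace ChainPartitionDatum

variable {V : Type*} [NormedAddCommGroup V] [InnerProductSpace ℝ V]
variable {M : ℕ} {e : Fin M → V}

/-- the chain index of the block containing `i` -/
noncomputable def tagh (D : ChainPartitionDatum M V e) (i : Fin M) : Fin D.L :=
  (D.Δ_union i).choose

/-- the level of the block containing `i` -/
noncomputable def tagm (D : ChainPartitionDatum M V e) (i : Fin M) : ℤ :=
  (D.Δ_union i).choose_spec.choose

lemma tag_spec (D : ChainPartitionDatum M V e) (i : Fin M) :
    D.l1 (D.tagh i) ≤ D.tagm i ∧ D.tagm i ≤ D.l2 (D.tagh i) ∧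
      i ∈ D.Δ (D.tagh i) (D.tagm i) :=
  (D.Δ_union i).choose_spec.choose_spec

lemma tag_unique (D : ChainPartitionDatum M V e) {i : Fin M} {h : Fin D.L} {m : ℤ}
    (h1 : D.l1 h ≤ m) (h2 : m ≤ D.l2 h) (hi : i ∈ D.Δ h m) :
    D.tagh i = h ∧ D.tagm i = m := by
  obtain ⟨t1, t2, t3⟩ := D.tag_spec i
  by_contra hc
  have hne : (D.tagh i, D.tagm i) ≠ (h, m) := by
    intro heq
    exact hc ⟨congrArg Prod.fst heq, congrArg Prod.snd heq⟩
  have hd := D.Δ_disjoint _ _ _ _ t1 t2 h1 h2 hne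
  exact Finset.disjoint_left.mp hd t3 hi

lemma inner_betaHat_s13 (D : ChainPartitionDatum M V e) (he : ∀ i, e i ≠ 0)
    (horth : ∀ i j : Fin M, i ≠ j → ⟪e i, e j⟫ = 0) (i : Fin M) :
    ⟪e i, D.betaHat⟫ = D.eps (D.tagh i) - (D.tagm i : ℝ) := by
  have hne : (‖e i‖ : ℝ) ^ 2 ≠ 0 := pow_ne_zero 2 (norm_ne_zero_iff.mpr (he i))
  have step1 : ∀ (h : Fin D.L) (m : ℤ),
      ⟪e i, ∑ j ∈ D.Δ h m, ((D.eps h - (m : ℝ)) / ‖e j‖ ^ 2) • e j⟫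
        = if i ∈ D.Δ h m then D.eps h - (m : ℝ) else 0 := by
    intro h m
    rw [inner_sum]
    by_cases hi : i ∈ D.Δ h m
    · rw [if_pos hi, Finset.sum_eq_single_of_mem i hi]
      · rw [real_inner_smul_right, real_inner_self_eq_norm_sq, div_mul_cancel₀ _ hne]
      · intro j hj hji
        rw [real_inner_smul_right, horth i j (Ne.symm hji), mul_zero]
    · rw [if_neg hi, Finset.sum_eq_zero]
      intro j hj
      have hij : i ≠ j := by rintro rfl; exact hi hj
      rw [real_inner_smul_right, horth i j hij, mul_zero]
  obtain ⟨t1, t2, t3⟩ := D.tag_spec i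
  have : ⟪e i, D.betaHat⟫ = ∑ h : Fin D.L, ∑ m ∈ Finset.Icc (D.l1 h) (D.l2 h),
      (if i ∈ D.Δ h m then D.eps h - (m : ℝ) else 0) := by
    unfold betaHat
    rw [inner_sum]
    refine Finset.sum_congr rfl fun h _ => ?_
    rw [inner_sum]
    exact Finset.sum_congr rfl fun m _ => step1 h m
  rw [this, Finset.sum_eq_single (D.tagh i)]
  · rw [Finset.sum_eq_single (D.tagm i)]
    · rw [if_pos t3]
    · intro m hm hne'
      rw [Finset.mem_Icc] at hm
      rw [if_neg]
      intro hi
      exact hne' (D.tag_unique hm.1 hm.2 hi).2.symm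
    · intro habs
      exact absurd (Finset.mem_Icc.mpr ⟨t1, t2⟩) habs
  · intro h _ hne'
    apply Finset.sum_eq_zero
    intro m hm
    rw [Finset.mem_Icc] at hm
    rw [if_neg]
    intro hi
    exact hne' (D.tag_unique hm.1 hm.2 hi).1.symm
  · intro habs
    exact absurd (Finset.mem_univ _) habs

end ChainPartitionDatum

lemma strictAnti_fin_eq_of_image_eq {n : ℕ} {f g : Fin n → ℝ} (hf : StrictAnti f)
    (hg : StrictAnti g)
    (h : Finset.image f Finset.univ = Finset.image g Finset.univ) : f = g := by
  have hcard : (Finset.image f Finset.univ).card = n := by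
    rw [Finset.card_image_of_injective _ hf.injective, Finset.card_univ,
      Fintype.card_fin]
  have hf' : f ∘ Fin.rev = ⇑((Finset.image f Finset.univ).orderEmbOfFin hcard) := by
    refine Finset.orderEmbOfFin_unique hcard (fun x => ?_) (fun a b hab => ?_)
    · exact Finset.mem_image_of_mem f (Finset.mem_univ _)
    · exact hf (Fin.rev_lt_rev.mpr hab)
  have hg' : g ∘ Fin.rev = ⇑((Finset.image f Finset.univ).orderEmbOfFin hcard) := by
    refine Finset.orderEmbOfFin_unique hcard (fun x => ?_) (fun a b hab => ?_)
    · rw [h]; exact Finset.mem_image_of_mem g (Finset.mem_univ _)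
    · exact hg (Fin.rev_lt_rev.mpr hab)
  funext x
  have := congrFun (hf'.trans hg'.symm) x.rev
  simpa [Fin.rev_rev] using this

/-- Two admissible chain-partition data for `e_1,…,e_M` determining the
same vector `β̂` coincide: `L = L'`, `l1 = l1'`, `l2 = l2'` (so `J = J'`), and
`Δ_{h,m} = Δ'_{h,m}` for every `(h,m) ∈ J`. -/
theorem admissible_chainPartitionDatum_eq_of_betaHat_eq
    {V : Type*} [NormedAddCommGroup V] [InnerProductSpace ℝ V]
    {M : ℕ} (hM : 0 < M) (e : Fin M → V) (he : ∀ i, e i ≠ 0)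
    (horth : ∀ i j : Fin M, i ≠ j → ⟪e i, e j⟫ = 0)
    (D D' : ChainPartitionDatum M V e)
    (hD : D.Admissible) (hD' : D'.Admissible)
    (hβ : D.betaHat = D'.betaHat) :
    ∃ hL : D.L = D'.L,
      (∀ h : Fin D.L, D.l1 h = D'.l1 (Fin.cast hL h) ∧ D.l2 h = D'.l2 (Fin.cast hL h)) ∧
        ∀ (h : Fin D.L) (m : ℤ), D.l1 h ≤ m → m ≤ D.l2 h →
          D.Δ h m = D'.Δ (Fin.cast hL h) m := by
  obtain ⟨hDb, hDanti⟩ := hD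
  obtain ⟨hD'b, hD'anti⟩ := hD'
  have hcoef : ∀ i, D.eps (D.tagh i) - (D.tagm i : ℝ)
      = D'.eps (D'.tagh i) - (D'.tagm i : ℝ) := by
    intro i
    rw [← D.inner_betaHat_s13 he horth i, ← D'.inner_betaHat_s13 he horth i, hβ]
  have key : ∀ i, D.eps (D.tagh i) = D'.eps (D'.tagh i) ∧ D.tagm i = D'.tagm i := by
    intro i
    have h1 := hDb (D.tagh i)
    have h2 := hD'b (D'.tagh i)
    have hc := hcoef i
    have hm : D.tagm i = D'.tagm i := by
      by_contra hne
      have h3 : (1 : ℤ) ≤ |D.tagm i - D'.tagm i| := Int.one_le_abs (sub_ne_zero.mpr hne)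
      have h4 : (1 : ℝ) ≤ |((D.tagm i - D'.tagm i : ℤ) : ℝ)| := by exact_mod_cast h3
      rw [Int.cast_sub] at h4
      have h5 : |(D.tagm i : ℝ) - (D'.tagm i : ℝ)| < 1 := by
        rw [abs_lt]; constructor <;> linarith
      linarith [h4]
    constructor
    · rw [hm] at hc; linarith
    · exact hm
  have himg : Finset.image D.eps Finset.univ = Finset.image D'.eps Finset.univ := by
    apply Finset.Subset.antisymm <;> intro x hx <;>
      simp only [Finset.mem_image, Finset.mem_univ, true_and] at hx ⊢
    · obtain ⟨h, rfl⟩ := hx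
      obtain ⟨i, hi⟩ := D.Δ_nonempty h (D.l1 h) le_rfl (D.l1_le_l2 h)
      have ht := D.tag_unique le_rfl (D.l1_le_l2 h) hi
      exact ⟨D'.tagh i, by rw [← (key i).1, ht.1]⟩
    · obtain ⟨h, rfl⟩ := hx
      obtain ⟨i, hi⟩ := D'.Δ_nonempty h (D'.l1 h) le_rfl (D'.l1_le_l2 h)
      have ht := D'.tag_unique le_rfl (D'.l1_le_l2 h) hi
      exact ⟨D.tagh i, by rw [(key i).1, ht.1]⟩
  have hL : D.L = D'.L := by
    have c1 : (Finset.image D.eps Finset.univ).card = D.L := by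
      rw [Finset.card_image_of_injective _ hDanti.injective, Finset.card_univ,
        Fintype.card_fin]
    have c2 : (Finset.image D'.eps Finset.univ).card = D'.L := by
      rw [Finset.card_image_of_injective _ hD'anti.injective, Finset.card_univ,
        Fintype.card_fin]
    rw [← c1, himg, c2]
  -- eps agrees along the cast
  have hcastmono : StrictMono (Fin.cast hL) := fun a b hab => hab
  have hcastsurj : Function.Surjective (Fin.cast hL) := (finCongr hL).surjective
  have heps : ∀ h : Fin D.L, D.eps h = D'.eps (Fin.cast hL h) := by
    have hg : StrictAnti (fun h : Fin D.L => D'.eps (Fin.cast hL h)) :=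
      hD'anti.comp_strictMono hcastmono
    have himg2 : Finset.image D.eps Finset.univ
        = Finset.image (fun h : Fin D.L => D'.eps (Fin.cast hL h)) Finset.univ := by
      rw [himg]
      have : Finset.image (Fin.cast hL) (Finset.univ : Finset (Fin D.L))
          = Finset.univ := Finset.image_univ_of_surjective hcastsurj
      rw [← this, Finset.image_image]
      rfl
    exact fun h => congrFun (strictAnti_fin_eq_of_image_eq hDanti hg himg2) h
  -- tags correspond
  have htagh : ∀ i, D'.tagh i = Fin.cast hL (D.tagh i) := by
    intro i
    apply hD'anti.injective
    rw [← (key i).1, heps]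
  have htagD'ofD : ∀ (i : Fin M) (h : Fin D.L) (m : ℤ),
      D.tagh i = h → D.tagm i = m →
      D'.tagh i = Fin.cast hL h ∧ D'.tagm i = m := by
    intro i h m e1 e2
    exact ⟨by rw [htagh i, e1], by rw [← (key i).2, e2]⟩
  have htagDofD' : ∀ (i : Fin M) (h : Fin D.L) (m : ℤ),
      D'.tagh i = Fin.cast hL h → D'.tagm i = m →
      D.tagh i = h ∧ D.tagm i = m := by
    intro i h m e1 e2
    refine ⟨?_, by rw [(key i).2, e2]⟩
    have hcv := (htagh i).symm.trans e1
    have hv : (Fin.cast hL (D.tagh i)).val = (Fin.cast hL h).val := congrArg Fin.val hcv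
    exact Fin.ext hv
  have hIcc : ∀ h : Fin D.L, Finset.Icc (D.l1 h) (D.l2 h)
      = Finset.Icc (D'.l1 (Fin.cast hL h)) (D'.l2 (Fin.cast hL h)) := by
    intro h
    ext m
    simp only [Finset.mem_Icc]
    constructor
    · rintro ⟨h1, h2⟩
      obtain ⟨i, hi⟩ := D.Δ_nonempty h m h1 h2
      have ht := D.tag_unique h1 h2 hi
      obtain ⟨e1, e2⟩ := htagD'ofD i h m ht.1 ht.2
      have t' := D'.tag_spec i
      rw [e1, e2] at t'
      exact ⟨t'.1, t'.2.1⟩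
    · rintro ⟨h1, h2⟩
      obtain ⟨i, hi⟩ := D'.Δ_nonempty (Fin.cast hL h) m h1 h2
      have ht := D'.tag_unique h1 h2 hi
      obtain ⟨e1, e2⟩ := htagDofD' i h m ht.1 ht.2
      have t := D.tag_spec i
      rw [e1, e2] at t
      exact ⟨t.1, t.2.1⟩
  have hl : ∀ h : Fin D.L, D.l1 h = D'.l1 (Fin.cast hL h) ∧
      D.l2 h = D'.l2 (Fin.cast hL h) := by
    intro h
    have m1 : D.l1 h ∈ Finset.Icc (D'.l1 (Fin.cast hL h)) (D'.l2 (Fin.cast hL h)) := by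
      rw [← hIcc h]; exact Finset.mem_Icc.mpr ⟨le_rfl, D.l1_le_l2 h⟩
    have m2 : D.l2 h ∈ Finset.Icc (D'.l1 (Fin.cast hL h)) (D'.l2 (Fin.cast hL h)) := by
      rw [← hIcc h]; exact Finset.mem_Icc.mpr ⟨D.l1_le_l2 h, le_rfl⟩
    have m3 : D'.l1 (Fin.cast hL h) ∈ Finset.Icc (D.l1 h) (D.l2 h) := by
      rw [hIcc h]; exact Finset.mem_Icc.mpr ⟨le_rfl, D'.l1_le_l2 _⟩
    have m4 : D'.l2 (Fin.cast hL h) ∈ Finset.Icc (D.l1 h) (D.l2 h) := by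
      rw [hIcc h]; exact Finset.mem_Icc.mpr ⟨D'.l1_le_l2 _, le_rfl⟩
    rw [Finset.mem_Icc] at m1 m2 m3 m4
    exact ⟨by omega, by omega⟩
  refine ⟨hL, hl, ?_⟩
  intro h m h1 h2
  have h1' : D'.l1 (Fin.cast hL h) ≤ m := (hl h).1 ▸ h1
  have h2' : m ≤ D'.l2 (Fin.cast hL h) := (hl h).2 ▸ h2
  ext i
  constructor
  · intro hi
    have ht := D.tag_unique h1 h2 hi
    obtain ⟨e1, e2⟩ := htagD'ofD i h m ht.1 ht.2
    have t' := (D'.tag_spec i).2.2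
    rwa [e1, e2] at t'
  · intro hi
    have ht := D'.tag_unique h1' h2' hi
    obtain ⟨e1, e2⟩ := htagDofD' i h m ht.1 ht.2
    have t := (D.tag_spec i).2.2
    rwa [e1, e2] at t
end

section
/- Let an admissible chain-partition datum for e_1,…,e_M be given. Then ‖β̂‖² = Σ_{h=1}^{L} Σ_{m=l_1(h)}^{l_2(h)} (m − ε(h))² r_{h,m} = Σ_{h=1}^{L} (Σ_{l_1(h) ≤ i < j ≤ l_2(h)} (j − i)² r_{h,i} r_{h,j}) / (Σ_{m=l_1(h)}^{l_2(h)} r_{h,m}). In particular, if β̂ ≠ 0 and β = β̂/‖β̂‖², then 1/‖β‖² equals both of these expressions. -/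
open scoped RealInnerProductSpace BigOperators
section AuxLemmas
open Finset

lemma square_expand (a b : ℤ) (r : ℤ → ℝ) :
    ∑ i ∈ Icc a b, ∑ j ∈ Icc a b, ((j:ℝ)-(i:ℝ))^2 * r i * r j
      = 2 * ((∑ m ∈ Icc a b, (m:ℝ)^2 * r m) * (∑ m ∈ Icc a b, r m)
          - (∑ m ∈ Icc a b, (m:ℝ) * r m)^2) := by
  have h1 : ∀ i ∈ Icc a b, ∑ j ∈ Icc a b, ((j:ℝ)-(i:ℝ))^2 * r i * r j
      = r i * (∑ m ∈ Icc a b, (m:ℝ)^2 * r m)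
        + ((i:ℝ)^2 * r i) * (∑ m ∈ Icc a b, r m)
        - (2*(i:ℝ)*r i) * (∑ m ∈ Icc a b, (m:ℝ) * r m) := by
    intro i _
    rw [Finset.mul_sum, Finset.mul_sum, Finset.mul_sum, ← Finset.sum_add_distrib,
      ← Finset.sum_sub_distrib]
    exact Finset.sum_congr rfl fun j _ => by ring
  rw [Finset.sum_congr rfl h1, Finset.sum_sub_distrib, Finset.sum_add_distrib,
    ← Finset.sum_mul, ← Finset.sum_mul, ← Finset.sum_mul]
  have h2 : ∑ x ∈ Icc a b, 2*(x:ℝ)*r x = 2 * ∑ m ∈ Icc a b, (m:ℝ) * r m := by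
    rw [Finset.mul_sum]; exact Finset.sum_congr rfl fun _ _ => by ring
  rw [h2]; ring

lemma upper_half (a b : ℤ) (r : ℤ → ℝ) :
    2 * ∑ i ∈ Icc a b, ∑ j ∈ Icc (i+1) b, ((j:ℝ)-(i:ℝ))^2 * r i * r j
      = ∑ i ∈ Icc a b, ∑ j ∈ Icc a b, ((j:ℝ)-(i:ℝ))^2 * r i * r j := by
  set f : ℤ → ℤ → ℝ := fun i j => ((j:ℝ)-(i:ℝ))^2 * r i * r j with hf
  have hicc : ∀ i ∈ Icc a b, Icc (i+1) b = (Icc a b).filter (i < ·) := by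
    intro i hi
    rw [Finset.mem_Icc] at hi
    ext j
    simp only [Finset.mem_Icc, Finset.mem_filter]
    omega
  have hT : ∑ i ∈ Icc a b, ∑ j ∈ Icc (i+1) b, f i j
      = ∑ i ∈ Icc a b, ∑ j ∈ (Icc a b).filter (i < ·), f i j :=
    Finset.sum_congr rfl fun i hi => by rw [hicc i hi]
  have hsplit : ∑ i ∈ Icc a b, ∑ j ∈ Icc a b, f i j
      = (∑ i ∈ Icc a b, ∑ j ∈ (Icc a b).filter (i < ·), f i j)
        + ∑ i ∈ Icc a b, ∑ j ∈ (Icc a b).filter (¬ i < ·), f i j := by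
    rw [← Finset.sum_add_distrib]
    exact Finset.sum_congr rfl fun i _ => (Finset.sum_filter_add_sum_filter_not _ _ _).symm
  have hU : ∑ i ∈ Icc a b, ∑ j ∈ (Icc a b).filter (¬ i < ·), f i j
      = ∑ i ∈ Icc a b, ∑ j ∈ (Icc a b).filter (i < ·), f i j := by
    have e1 : ∀ i : ℤ, (Icc a b).filter (¬ i < ·) = (Icc a b).filter (· ≤ i) := by
      intro i; apply Finset.filter_congr; intro j _; simp [not_lt]
    calc ∑ i ∈ Icc a b, ∑ j ∈ (Icc a b).filter (¬ i < ·), f i j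
        = ∑ i ∈ Icc a b, ∑ j ∈ (Icc a b).filter (· ≤ i), f i j := by
          exact Finset.sum_congr rfl fun i _ => by rw [e1]
      _ = ∑ j ∈ Icc a b, ∑ i ∈ (Icc a b).filter (j ≤ ·), f i j := by
          refine Finset.sum_comm' ?_
          intro i j
          simp only [Finset.mem_filter]
          tauto
      _ = ∑ j ∈ Icc a b, ∑ i ∈ (Icc a b).filter (j ≤ ·), f j i := by
          refine Finset.sum_congr rfl fun j _ => Finset.sum_congr rfl fun i _ => ?_
          simp only [hf]; ring
      _ = ∑ j ∈ Icc a b, ∑ i ∈ (Icc a b).filter (j < ·), f j i := by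
          refine Finset.sum_congr rfl fun j hj => ?_
          have : (Icc a b).filter (j ≤ ·) = insert j ((Icc a b).filter (j < ·)) := by
            rw [Finset.mem_Icc] at hj
            ext i
            simp only [Finset.mem_filter, Finset.mem_insert, Finset.mem_Icc]
            omega
          rw [this, Finset.sum_insert (by simp [Finset.mem_filter])]
          have : f j j = 0 := by simp [hf]
          rw [this, zero_add]
  rw [hT, hsplit, hU]; ring

lemma variance_identity (a b : ℤ) (hab : a ≤ b) (r : ℤ → ℝ)
    (hr : ∀ m ∈ Icc a b, 0 < r m)
    (hsq : ∑ i ∈ Icc a b, ∑ j ∈ Icc (i+1) b, ((j:ℝ)-(i:ℝ))^2 * r i * r j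
      = (∑ m ∈ Icc a b, (m:ℝ)^2 * r m) * (∑ m ∈ Icc a b, r m)
          - (∑ m ∈ Icc a b, (m:ℝ) * r m)^2) :
    ∑ m ∈ Icc a b, ((m:ℝ) - (∑ m ∈ Icc a b, (m:ℝ) * r m) / (∑ m ∈ Icc a b, r m))^2 * r m
      = (∑ i ∈ Icc a b, ∑ j ∈ Icc (i+1) b, ((j:ℝ)-(i:ℝ))^2 * r i * r j)
        / (∑ m ∈ Icc a b, r m) := by
  have hR : 0 < ∑ m ∈ Icc a b, r m :=
    Finset.sum_pos hr (by rw [Finset.nonempty_Icc]; exact hab)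
  set R := ∑ m ∈ Icc a b, r m
  set B := ∑ m ∈ Icc a b, (m:ℝ) * r m
  set A := ∑ m ∈ Icc a b, (m:ℝ)^2 * r m
  have hL : ∑ m ∈ Icc a b, ((m:ℝ) - B / R)^2 * r m
      = A - 2*(B/R)*B + (B/R)^2 * R := by
    have : ∀ m ∈ Icc a b, ((m:ℝ) - B / R)^2 * r m
        = (m:ℝ)^2 * r m - 2*(B/R)*((m:ℝ)*r m) + (B/R)^2 * r m := fun m _ => by ring
    rw [Finset.sum_congr rfl this, Finset.sum_add_distrib, Finset.sum_sub_distrib,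
      ← Finset.mul_sum, ← Finset.mul_sum]
  rw [hL, hsq]
  field_simp
  ring

end AuxLemmas

section AuxLemmas2
open Finset

lemma flatten_aux {V : Type*} [NormedAddCommGroup V] [InnerProductSpace ℝ V]
    {M : ℕ} {e : Fin M → V} (D : ChainPartitionDatum M V e) {γ : Type*} [AddCommMonoid γ]
    (f : Fin M → γ) :
    (∑ h : Fin D.L, ∑ m ∈ Finset.Icc (D.l1 h) (D.l2 h), ∑ j ∈ D.Δ h m, f j)
      = ∑ j : Fin M, f j := by
  have step1 : ∀ h : Fin D.L, ∑ m ∈ Finset.Icc (D.l1 h) (D.l2 h), ∑ j ∈ D.Δ h m, f j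
      = ∑ j ∈ (Finset.Icc (D.l1 h) (D.l2 h)).biUnion (D.Δ h), f j := by
    intro h
    refine (Finset.sum_biUnion ?_).symm
    intro m hm m' hm' hne
    rw [Finset.coe_Icc, Set.mem_Icc] at hm hm'
    exact D.Δ_disjoint h m h m' hm.1 hm.2 hm'.1 hm'.2 (by simp [hne])
  have step2 : (∑ h : Fin D.L, ∑ j ∈ (Finset.Icc (D.l1 h) (D.l2 h)).biUnion (D.Δ h), f j)
      = ∑ j ∈ Finset.univ.biUnion
          (fun h => (Finset.Icc (D.l1 h) (D.l2 h)).biUnion (D.Δ h)), f j := by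
    refine (Finset.sum_biUnion ?_).symm
    intro h _ h' _ hne
    simp only [Function.onFun]
    rw [Finset.disjoint_biUnion_left]
    intro m hm
    rw [Finset.disjoint_biUnion_right]
    intro m' hm'
    rw [Finset.mem_Icc] at hm hm'
    exact D.Δ_disjoint h m h' m' hm.1 hm.2 hm'.1 hm'.2 (by simp [hne])
  have step3 : Finset.univ.biUnion
      (fun h : Fin D.L => (Finset.Icc (D.l1 h) (D.l2 h)).biUnion (D.Δ h)) = Finset.univ := by
    ext j
    simp only [Finset.mem_biUnion, Finset.mem_univ, iff_true, Finset.mem_Icc]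
    obtain ⟨h, m, h1, h2, hj⟩ := D.Δ_union j
    exact ⟨h, trivial, m, ⟨h1, h2⟩, hj⟩
  rw [Finset.sum_congr rfl fun h _ => step1 h, step2, step3]

lemma norm_sq_sum_smul_aux {V : Type*} [NormedAddCommGroup V] [InnerProductSpace ℝ V]
    {M : ℕ} {e : Fin M → V} (he : ∀ i, e i ≠ 0)
    (horth : ∀ i j : Fin M, i ≠ j → ⟪e i, e j⟫ = 0) (c : Fin M → ℝ) :
    ‖∑ j : Fin M, (c j / ‖e j‖^2) • e j‖^2 = ∑ j : Fin M, (c j)^2 / ‖e j‖^2 := by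
  rw [← real_inner_self_eq_norm_sq, sum_inner]
  refine Finset.sum_congr rfl fun i _ => ?_
  rw [inner_sum]
  rw [Finset.sum_eq_single_of_mem i (Finset.mem_univ i)]
  · rw [real_inner_smul_left, real_inner_smul_right, real_inner_self_eq_norm_sq]
    have hne : ‖e i‖ ≠ 0 := norm_ne_zero_iff.2 (he i)
    field_simp
  · intro j _ hji
    rw [real_inner_smul_left, real_inner_smul_right, horth i j (Ne.symm hji)]
    ring

end AuxLemmas2

/-- For an admissible chain-partition datum,
`‖β̂‖² = Σ_h Σ_{m=l1(h)}^{l2(h)} (m − ε(h))² r_{h,m}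
      = Σ_h (Σ_{l1(h) ≤ i < j ≤ l2(h)} (j − i)² r_{h,i} r_{h,j}) / (Σ_m r_{h,m})`;
in particular if `β̂ ≠ 0` and `β = β̂/‖β̂‖²` then `1/‖β‖²` equals both expressions. -/
theorem norm_sq_betaHat_eq
    {V : Type*} [NormedAddCommGroup V] [InnerProductSpace ℝ V]
    {M : ℕ} (hM : 0 < M) (e : Fin M → V) (he : ∀ i, e i ≠ 0)
    (horth : ∀ i j : Fin M, i ≠ j → ⟪e i, e j⟫ = 0)
    (D : ChainPartitionDatum M V e) (hD : D.Admissible) :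
    (‖D.betaHat‖ ^ 2 = ∑ h : Fin D.L, ∑ m ∈ Finset.Icc (D.l1 h) (D.l2 h),
        ((m : ℝ) - D.eps h) ^ 2 * D.r h m) ∧
      (‖D.betaHat‖ ^ 2 = ∑ h : Fin D.L,
        (∑ i ∈ Finset.Icc (D.l1 h) (D.l2 h), ∑ j ∈ Finset.Icc (i + 1) (D.l2 h),
            ((j : ℝ) - (i : ℝ)) ^ 2 * D.r h i * D.r h j) /
          ∑ m ∈ Finset.Icc (D.l1 h) (D.l2 h), D.r h m) ∧
      (D.betaHat ≠ 0 →
        (‖(‖D.betaHat‖ ^ 2)⁻¹ • D.betaHat‖ ^ 2)⁻¹ =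
            (∑ h : Fin D.L, ∑ m ∈ Finset.Icc (D.l1 h) (D.l2 h),
              ((m : ℝ) - D.eps h) ^ 2 * D.r h m) ∧
          (‖(‖D.betaHat‖ ^ 2)⁻¹ • D.betaHat‖ ^ 2)⁻¹ =
            ∑ h : Fin D.L,
              (∑ i ∈ Finset.Icc (D.l1 h) (D.l2 h), ∑ j ∈ Finset.Icc (i + 1) (D.l2 h),
                  ((j : ℝ) - (i : ℝ)) ^ 2 * D.r h i * D.r h j) /
                ∑ m ∈ Finset.Icc (D.l1 h) (D.l2 h), D.r h m) := by
    classical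
  choose hfun mfun hm1 hm2 hmem using D.Δ_union
  set c : Fin M → ℝ := fun j => D.eps (hfun j) - (mfun j : ℝ) with hc
  have hcval : ∀ (h : Fin D.L) (m : ℤ), D.l1 h ≤ m → m ≤ D.l2 h → ∀ j ∈ D.Δ h m,
      c j = D.eps h - (m : ℝ) := by
    intro h m h1 h2 j hj
    have huniq : (hfun j, mfun j) = (h, m) := by
      by_contra hne
      exact Finset.disjoint_left.1
        (D.Δ_disjoint _ _ _ _ (hm1 j) (hm2 j) h1 h2 hne) (hmem j) hj
    rw [Prod.mk.injEq] at huniq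
    simp [hc, huniq.1, huniq.2]
  have hbeta : D.betaHat = ∑ j : Fin M, (c j / ‖e j‖^2) • e j := by
    rw [ChainPartitionDatum.betaHat, ← flatten_aux D (fun j => (c j / ‖e j‖^2) • e j)]
    refine Finset.sum_congr rfl fun h _ => Finset.sum_congr rfl fun m hm =>
      Finset.sum_congr rfl fun j hj => ?_
    rw [Finset.mem_Icc] at hm
    rw [hcval h m hm.1 hm.2 j hj]
  have hexpr1 : (∑ h : Fin D.L, ∑ m ∈ Finset.Icc (D.l1 h) (D.l2 h),
      ((m : ℝ) - D.eps h) ^ 2 * D.r h m) = ∑ j : Fin M, (c j)^2 / ‖e j‖^2 := by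
    rw [← flatten_aux D (fun j => (c j)^2 / ‖e j‖^2)]
    refine Finset.sum_congr rfl fun h _ => Finset.sum_congr rfl fun m hm => ?_
    rw [Finset.mem_Icc] at hm
    rw [ChainPartitionDatum.r, Finset.mul_sum]
    refine Finset.sum_congr rfl fun j hj => ?_
    rw [hcval h m hm.1 hm.2 j hj]
    rw [div_eq_mul_inv]
    ring
  have eq1 : ‖D.betaHat‖ ^ 2 = ∑ h : Fin D.L, ∑ m ∈ Finset.Icc (D.l1 h) (D.l2 h),
      ((m : ℝ) - D.eps h) ^ 2 * D.r h m := by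
    rw [hbeta, norm_sq_sum_smul_aux he horth c, hexpr1]
  have eq2 : (∑ h : Fin D.L, ∑ m ∈ Finset.Icc (D.l1 h) (D.l2 h),
      ((m : ℝ) - D.eps h) ^ 2 * D.r h m) = ∑ h : Fin D.L,
        (∑ i ∈ Finset.Icc (D.l1 h) (D.l2 h), ∑ j ∈ Finset.Icc (i + 1) (D.l2 h),
            ((j : ℝ) - (i : ℝ)) ^ 2 * D.r h i * D.r h j) /
          ∑ m ∈ Finset.Icc (D.l1 h) (D.l2 h), D.r h m := by
    refine Finset.sum_congr rfl fun h _ => ?_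
    have hrpos : ∀ m ∈ Finset.Icc (D.l1 h) (D.l2 h), 0 < D.r h m := by
      intro m hm
      rw [Finset.mem_Icc] at hm
      refine Finset.sum_pos (fun j _ => ?_) (D.Δ_nonempty h m hm.1 hm.2)
      have : ‖e j‖ ≠ 0 := norm_ne_zero_iff.2 (he j)
      positivity
    have hsq : ∑ i ∈ Finset.Icc (D.l1 h) (D.l2 h), ∑ j ∈ Finset.Icc (i+1) (D.l2 h),
        ((j:ℝ)-(i:ℝ))^2 * D.r h i * D.r h j
          = (∑ m ∈ Finset.Icc (D.l1 h) (D.l2 h), (m:ℝ)^2 * D.r h m)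
              * (∑ m ∈ Finset.Icc (D.l1 h) (D.l2 h), D.r h m)
            - (∑ m ∈ Finset.Icc (D.l1 h) (D.l2 h), (m:ℝ) * D.r h m)^2 := by
      have h1 := upper_half (D.l1 h) (D.l2 h) (D.r h)
      have h2 := square_expand (D.l1 h) (D.l2 h) (D.r h)
      linarith [h1, h2]
    have := variance_identity (D.l1 h) (D.l2 h) (D.l1_le_l2 h) (D.r h) hrpos hsq
    rw [ChainPartitionDatum.eps]
    exact this
  refine ⟨eq1, eq1.trans eq2, fun hne => ?_⟩
  have hn : ‖D.betaHat‖ ≠ 0 := norm_ne_zero_iff.2 hne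
  have hcalc : (‖(‖D.betaHat‖ ^ 2)⁻¹ • D.betaHat‖ ^ 2)⁻¹ = ‖D.betaHat‖ ^ 2 := by
    rw [norm_smul, Real.norm_eq_abs, abs_of_nonneg (by positivity), mul_pow]
    field_simp
  rw [hcalc]
  exact ⟨eq1, eq1.trans eq2⟩
end
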